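/- arXiv:1506.06613 — 12 statements merged into one kernel-verified Lean document; each statement's English description precedes it below -/
import Mathlib

section
/- Suppose the system is SOST (contractive after a small overshoot and short transient) on Ω with respect to the norm |·|, and is T-periodic, i.e., x(t+T, t₁+T, a) = x(t, t₁, a) for all t ≥ t₁ ≥ 0 and a ∈ Ω. Then for every t₀ ≥ 0 there exists a trajectory γ : [t₀, ∞) → Ω (i.e., γ(t) = x(t, s, γ(s)) for all t ≥ s ≥ t₀) that is periodic with period T (γ(t+T) = γ(t) for all t ≥ t₀), this T-periodic trajectory is unique, and for every a ∈ Ω, |x(t, t₀, a) − γ(t)| → 0 as t → ∞. -/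
/-! The period map `P = x (t₀ + T) t₀` has iterates `P^[k] = x (t₀ + k T) t₀`, by periodicity
and the cocycle property, and SOST makes these a strict `ν`-contraction of `Ω` once `k` is large.
A minimiser of `a ↦ ν (P^[k] a - a)` on the compact set `Ω` is then the unique fixed point `p` of
`P^[k]`, hence of `P`. The solution through `p` is the periodic trajectory, and SOST again shows
that every solution started at `t₀` converges to it. -/

open Filter Topology Function Set

section Contraction

variable {E : Type*} [AddCommGroup E] [Module ℝ E] {ν : Seminorm ℝ E} {Ω : Set E} {c : ℝ}

lemma Seminorm.eq_zero_of_le_mul_self (hνdef : ∀ y, ν y = 0 → y = 0) (hc : c < 1) {y : E}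
    (h : ν y ≤ c * ν y) : y = 0 :=
  hνdef y <| le_antisymm (by nlinarith [apply_nonneg ν y]) (apply_nonneg ν y)

lemma eq_of_isFixedPt_of_contracting (hνdef : ∀ y, ν y = 0 → y = 0) (hc : c < 1) {Q : E → E}
    (hQ : ∀ a ∈ Ω, ∀ b ∈ Ω, ν (Q a - Q b) ≤ c * ν (a - b)) {p q : E} (hp : p ∈ Ω) (hq : q ∈ Ω)
    (hpQ : IsFixedPt Q p) (hqQ : IsFixedPt Q q) : p = q := by
  have h := hQ p hp q hq
  rw [hpQ.eq, hqQ.eq] at h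
  exact sub_eq_zero.1 (ν.eq_zero_of_le_mul_self hνdef hc h)

variable [TopologicalSpace E] [ContinuousSub E]

lemma exists_isFixedPt_of_contracting (hν : Continuous ν) (hνdef : ∀ y, ν y = 0 → y = 0)
    (hne : Ω.Nonempty) (hcomp : IsCompact Ω) {Q : E → E} (hmaps : MapsTo Q Ω Ω)
    (hQc : ContinuousOn Q Ω) (hc : c < 1)
    (hQ : ∀ a ∈ Ω, ∀ b ∈ Ω, ν (Q a - Q b) ≤ c * ν (a - b)) : ∃ p ∈ Ω, IsFixedPt Q p := by
  obtain ⟨p, hp, hmin⟩ :=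
    hcomp.exists_isMinOn hne (hν.comp_continuousOn (hQc.sub continuousOn_id))
  refine ⟨p, hp, sub_eq_zero.1 (ν.eq_zero_of_le_mul_self hνdef hc ?_)⟩
  calc ν (Q p - p) ≤ ν (Q (Q p) - Q p) := hmin (hmaps hp)
    _ ≤ c * ν (Q p - p) := hQ _ (hmaps hp) _ hp

lemma exists_unique_isFixedPt_of_iterate_contracting (hν : Continuous ν)
    (hνdef : ∀ y, ν y = 0 → y = 0) (hne : Ω.Nonempty) (hcomp : IsCompact Ω) {P : E → E}
    (hmaps : MapsTo P Ω Ω) (hPc : ContinuousOn P Ω) {k : ℕ} (hc : c < 1)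
    (hPk : ∀ a ∈ Ω, ∀ b ∈ Ω, ν (P^[k] a - P^[k] b) ≤ c * ν (a - b)) :
    ∃ p ∈ Ω, IsFixedPt P p ∧ ∀ q ∈ Ω, IsFixedPt P q → q = p := by
  obtain ⟨p, hp, hpk⟩ := exists_isFixedPt_of_contracting hν hνdef hne hcomp (hmaps.iterate k)
    (hPc.iterate hmaps k) hc hPk
  have huniq : ∀ q ∈ Ω, IsFixedPt P^[k] q → q = p := fun q hq hqk =>
    eq_of_isFixedPt_of_contracting hνdef hc hPk hq hp hqk hpk
  exact ⟨p, hp, huniq _ (hmaps hp) (hpk.map (Commute.self_iterate P k)),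
    fun q hq hqP => huniq q hq (hqP.iterate k)⟩

end Contraction

section Cocycle

variable {α : Type*} {Ω : Set α} {x : ℝ → ℝ → α → α} {T t₀ : ℝ}

lemma periodic_shift_nat_mul
    (hper : ∀ t t₁ a, 0 ≤ t₁ → t₁ ≤ t → a ∈ Ω → x (t + T) (t₁ + T) a = x t t₁ a) (hT : 0 ≤ T)
    (k : ℕ) {t t₁ : ℝ} {a : α} (ht₁ : 0 ≤ t₁) (ht : t₁ ≤ t) (ha : a ∈ Ω) :
    x (t + k * T) (t₁ + k * T) a = x t t₁ a := by
  induction k with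
  | zero => simp
  | succ k ih =>
    have hkT : 0 ≤ k * T := by positivity
    rw [Nat.cast_succ, add_one_mul, ← add_assoc, ← add_assoc,
      hper _ _ a (by positivity) (by linarith) ha, ih]

lemma iterate_eq_add_nat_mul_period (hinit : ∀ t₁ a, 0 ≤ t₁ → a ∈ Ω → x t₁ t₁ a = a)
    (hmem : ∀ t t₁ a, 0 ≤ t₁ → t₁ ≤ t → a ∈ Ω → x t t₁ a ∈ Ω)
    (hcoc : ∀ t₁ t₂ t₃ a, 0 ≤ t₁ → t₁ ≤ t₂ → t₂ ≤ t₃ → a ∈ Ω →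
      x t₃ t₂ (x t₂ t₁ a) = x t₃ t₁ a)
    (hper : ∀ t t₁ a, 0 ≤ t₁ → t₁ ≤ t → a ∈ Ω → x (t + T) (t₁ + T) a = x t t₁ a) (hT : 0 ≤ T)
    (ht₀ : 0 ≤ t₀) (k : ℕ) {a : α} (ha : a ∈ Ω) :
    (x (t₀ + T) t₀)^[k] a = x (t₀ + k * T) t₀ a := by
  induction k with
  | zero => simp [hinit t₀ a ht₀ ha]
  | succ k ih =>
    have hkT : 0 ≤ k * T := by positivity
    rw [iterate_succ_apply', ih, ← periodic_shift_nat_mul hper hT k ht₀ (by linarith)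
      (hmem _ _ a ht₀ (by linarith) ha), add_comm t₀ (k * T), hcoc _ _ _ a ht₀ (by linarith)
      (by linarith) ha]
    congr 1
    push_cast
    ring

lemma periodic_of_isFixedPt
    (hcoc : ∀ t₁ t₂ t₃ a, 0 ≤ t₁ → t₁ ≤ t₂ → t₂ ≤ t₃ → a ∈ Ω →
      x t₃ t₂ (x t₂ t₁ a) = x t₃ t₁ a)
    (hper : ∀ t t₁ a, 0 ≤ t₁ → t₁ ≤ t → a ∈ Ω → x (t + T) (t₁ + T) a = x t t₁ a) (hT : 0 ≤ T)
    (ht₀ : 0 ≤ t₀) {p : α} (hp : p ∈ Ω) (hfix : IsFixedPt (x (t₀ + T) t₀) p) {t : ℝ}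
    (ht : t₀ ≤ t) : x (t + T) t₀ p = x t t₀ p := by
  calc x (t + T) t₀ p = x (t + T) (t₀ + T) (x (t₀ + T) t₀ p) :=
        (hcoc _ _ _ p ht₀ (by linarith) (by linarith) hp).symm
    _ = x t t₀ p := by rw [hfix.eq, hper t t₀ p ht₀ ht hp]

end Cocycle

section SOST

variable {E : Type*} [AddCommGroup E] [Module ℝ E]

def IsSOST (Ω : Set E) (ν : Seminorm ℝ E) (x : ℝ → ℝ → E → E) : Prop :=
  ∀ ε > (0:ℝ), ∀ τ > (0:ℝ), ∃ ℓ > (0:ℝ), ∀ t₁ t₂ : ℝ, 0 ≤ t₁ → t₁ ≤ t₂ →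
    ∀ a ∈ Ω, ∀ b ∈ Ω,
      ν (x (t₂ + τ) t₁ a - x (t₂ + τ) t₁ b) ≤ (1 + ε) * Real.exp (-ℓ * (t₂ - t₁)) * ν (a - b)

lemma IsSOST.exists_contraction_factor {Ω : Set E} {ν : Seminorm ℝ E} {x : ℝ → ℝ → E → E}
    (hSOST : IsSOST Ω ν x) {t₀ : ℝ} (ht₀ : 0 ≤ t₀) :
    ∃ K : ℝ → ℝ, Tendsto K atTop (𝓝 0) ∧
      ∀ t ≥ t₀ + 1, ∀ a ∈ Ω, ∀ b ∈ Ω, ν (x t t₀ a - x t t₀ b) ≤ K t * ν (a - b) := by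
  obtain ⟨ℓ, hℓ, hcontr⟩ := hSOST 1 one_pos 1 one_pos
  refine ⟨fun t => 2 * Real.exp (-ℓ * (t - (t₀ + 1))), ?_, fun t ht a ha b hb => ?_⟩
  · have h : Tendsto (fun t : ℝ => -ℓ * (t - (t₀ + 1))) atTop atBot :=
      (tendsto_atTop_add_const_right _ (-(t₀ + 1)) tendsto_id).const_mul_atTop_of_neg
        (neg_lt_zero.2 hℓ)
    simpa using (Real.tendsto_exp_atBot.comp h).const_mul 2
  · convert hcontr t₀ (t - 1) ht₀ (by linarith) a ha b hb using 4 <;> ring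

end SOST

theorem sost_periodic_entrainment_general {n : ℕ}
    (Ω : Set (Fin n → ℝ)) (hne : Ω.Nonempty) (hcomp : IsCompact Ω)
    (ν : Seminorm ℝ (Fin n → ℝ)) (hνdef : ∀ y, ν y = 0 → y = 0)
    (T : ℝ) (hT : 0 < T)
    (x : ℝ → ℝ → (Fin n → ℝ) → (Fin n → ℝ))
    (hmem : ∀ t t₁ a, 0 ≤ t₁ → t₁ ≤ t → a ∈ Ω → x t t₁ a ∈ Ω)
    (hinit : ∀ t₁ a, 0 ≤ t₁ → a ∈ Ω → x t₁ t₁ a = a)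
    (hcoc : ∀ t₁ t₂ t₃ a, 0 ≤ t₁ → t₁ ≤ t₂ → t₂ ≤ t₃ → a ∈ Ω →
      x t₃ t₂ (x t₂ t₁ a) = x t₃ t₁ a)
    (hcont : ∀ t t₁, 0 ≤ t₁ → t₁ ≤ t → ContinuousOn (fun a => x t t₁ a) Ω)
    (hSOST : ∀ ε > (0:ℝ), ∀ τ > (0:ℝ), ∃ ℓ > (0:ℝ), ∀ t₁ t₂ : ℝ, 0 ≤ t₁ → t₁ ≤ t₂ →
      ∀ a ∈ Ω, ∀ b ∈ Ω,
        ν (x (t₂ + τ) t₁ a - x (t₂ + τ) t₁ b) ≤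
          (1 + ε) * Real.exp (-ℓ * (t₂ - t₁)) * ν (a - b))
    (hper : ∀ t t₁ a, 0 ≤ t₁ → t₁ ≤ t → a ∈ Ω → x (t + T) (t₁ + T) a = x t t₁ a) :
    ∀ t₀ ≥ (0:ℝ), ∃ γ : ℝ → (Fin n → ℝ),
      ((∀ t ≥ t₀, γ t ∈ Ω) ∧
       (∀ s t, t₀ ≤ s → s ≤ t → γ t = x t s (γ s)) ∧
       (∀ t ≥ t₀, γ (t + T) = γ t)) ∧
      (∀ γ' : ℝ → (Fin n → ℝ),
        ((∀ t ≥ t₀, γ' t ∈ Ω) ∧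
         (∀ s t, t₀ ≤ s → s ≤ t → γ' t = x t s (γ' s)) ∧
         (∀ t ≥ t₀, γ' (t + T) = γ' t)) →
        ∀ t ≥ t₀, γ' t = γ t) ∧
      (∀ a ∈ Ω, Tendsto (fun t => ν (x t t₀ a - γ t)) atTop (𝓝 0)) := by
  intro t₀ ht₀
  have hν : Continuous ν := ν.convexOn.locallyLipschitz.continuous
  obtain ⟨K, hK, hKbound⟩ := IsSOST.exists_contraction_factor hSOST ht₀
  obtain ⟨k, hk, hKk⟩ : ∃ k : ℕ, t₀ + 1 ≤ t₀ + k * T ∧ K (t₀ + k * T) < 1 := by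
    have h : Tendsto (fun k : ℕ => t₀ + k * T) atTop atTop :=
      tendsto_atTop_add_const_left _ _ (tendsto_natCast_atTop_atTop.atTop_mul_const hT)
    exact ((h.eventually_ge_atTop _).and ((hK.comp h).eventually (gt_mem_nhds one_pos))).exists
  obtain ⟨p, hp, hPp, huniq⟩ := exists_unique_isFixedPt_of_iterate_contracting
    hν hνdef hne hcomp
    (fun a ha => hmem (t₀ + T) t₀ a ht₀ (by linarith) ha)
    (hcont (t₀ + T) t₀ ht₀ (by linarith)) hKk
    fun a ha b hb => by
      rw [iterate_eq_add_nat_mul_period hinit hmem hcoc hper hT.le ht₀ k ha,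
        iterate_eq_add_nat_mul_period hinit hmem hcoc hper hT.le ht₀ k hb]
      exact hKbound _ hk a ha b hb
  refine ⟨fun t => x t t₀ p, ⟨fun t ht => hmem t t₀ p ht₀ ht hp,
    fun s t hs hst => (hcoc t₀ s t p ht₀ hs hst hp).symm,
    fun t ht => periodic_of_isFixedPt hcoc hper hT.le ht₀ hp hPp ht⟩, ?_, ?_⟩
  · rintro γ ⟨hγΩ, hγx, hγT⟩ t ht
    have hfix : IsFixedPt (x (t₀ + T) t₀) (γ t₀) :=
      (hγx t₀ (t₀ + T) le_rfl (by linarith)).symm.trans (hγT t₀ le_rfl)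
    rw [hγx t₀ t le_rfl ht, huniq _ (hγΩ t₀ le_rfl) hfix]
  · intro a ha
    refine squeeze_zero' (.of_forall fun t => apply_nonneg _ _) ?_
      (by simpa using hK.mul_const (ν (a - p)))
    filter_upwards [eventually_ge_atTop (t₀ + 1)] with t ht
    exact hKbound t ht a ha p hp

/-- A SOST system with a `T`-periodic solution map admits, for every
initial time `t₀ ≥ 0`, a unique `T`-periodic trajectory `γ : [t₀,∞) → Ω`, and every
solution converges to it. -/
theorem sost_periodic_entrainment {n : ℕ}
    (Ω : Set (Fin n → ℝ)) (hne : Ω.Nonempty) (hcomp : IsCompact Ω) (hconv : Convex ℝ Ω)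
    (ν : Seminorm ℝ (Fin n → ℝ)) (hνdef : ∀ y, ν y = 0 → y = 0)
    (T : ℝ) (hT : 0 < T)
    (x : ℝ → ℝ → (Fin n → ℝ) → (Fin n → ℝ))
    (hmem : ∀ t t₁ a, 0 ≤ t₁ → t₁ ≤ t → a ∈ Ω → x t t₁ a ∈ Ω)
    (hinit : ∀ t₁ a, 0 ≤ t₁ → a ∈ Ω → x t₁ t₁ a = a)
    (hcoc : ∀ t₁ t₂ t₃ a, 0 ≤ t₁ → t₁ ≤ t₂ → t₂ ≤ t₃ → a ∈ Ω →
      x t₃ t₂ (x t₂ t₁ a) = x t₃ t₁ a)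
    (hcont : ∀ t t₁, 0 ≤ t₁ → t₁ ≤ t → ContinuousOn (fun a => x t t₁ a) Ω)
    (hSOST : ∀ ε > (0:ℝ), ∀ τ > (0:ℝ), ∃ ℓ > (0:ℝ), ∀ t₁ t₂ : ℝ, 0 ≤ t₁ → t₁ ≤ t₂ →
      ∀ a ∈ Ω, ∀ b ∈ Ω,
        ν (x (t₂ + τ) t₁ a - x (t₂ + τ) t₁ b) ≤
          (1 + ε) * Real.exp (-ℓ * (t₂ - t₁)) * ν (a - b))
    (hper : ∀ t t₁ a, 0 ≤ t₁ → t₁ ≤ t → a ∈ Ω → x (t + T) (t₁ + T) a = x t t₁ a) :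
    ∀ t₀ ≥ (0:ℝ), ∃ γ : ℝ → (Fin n → ℝ),
      ((∀ t ≥ t₀, γ t ∈ Ω) ∧
       (∀ s t, t₀ ≤ s → s ≤ t → γ t = x t s (γ s)) ∧
       (∀ t ≥ t₀, γ (t + T) = γ t)) ∧
      (∀ γ' : ℝ → (Fin n → ℝ),
        ((∀ t ≥ t₀, γ' t ∈ Ω) ∧
         (∀ s t, t₀ ≤ s → s ≤ t → γ' t = x t s (γ' s)) ∧
         (∀ t ≥ t₀, γ' (t + T) = γ' t)) →
        ∀ t ≥ t₀, γ' t = γ t) ∧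
      (∀ a ∈ Ω, Tendsto (fun t => ν (x t t₀ a - γ t)) atTop (𝓝 0)) :=
  sost_periodic_entrainment_general Ω hne hcomp ν hνdef T hT x hmem hinit hcoc hcont hSOST hper
end

section
/- Suppose that the index set {1, …, n} is partitioned into two nonempty disjoint sets S₀ and S₋ such that for all x ∈ Ω: (1) c_k(J(x)) ≤ 0 for every k ∈ S₀; (2) c_j(J(x)) < 0 for every j ∈ S₋; and (3) for every i ∈ S₀ there exists an index z = z(i) ∈ S₋ such that J(x)_{z i} > 0. Then the system ẋ = f(x) is SOST on Ω with respect to the L¹ norm: for every ε > 0 and every τ > 0 there exists ℓ = ℓ(τ, ε) > 0 such that for any t₁ ≥ 0, any two solutions u, v : [t₁, ∞) → Ω of ẋ = f(x), and any t₂ ≥ t₁, one has ‖u(t₂+τ) − v(t₂+τ)‖₁ ≤ (1+ε)·exp(−ℓ(t₂−t₁))·‖u(t₁) − v(t₁)‖₁. -/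
open Filter Topology

/-- The Jacobian matrix of `f` at `x`: `(jac f x) i j = ∂f_i/∂x_j (x)`. -/
noncomputable def jac {n : ℕ} (f : (Fin n → ℝ) → (Fin n → ℝ)) (x : Fin n → ℝ) :
    Matrix (Fin n) (Fin n) ℝ :=
  fun i j => fderiv ℝ f x (Pi.single j 1) i

/-- `cCol A j = A_{jj} + Σ_{i ≠ j} |A_{ij}|`: the `j`-th column sum of `A` with the
off-diagonal entries replaced by their absolute values. -/
def cCol {n : ℕ} (A : Matrix (Fin n) (Fin n) ℝ) (j : Fin n) : ℝ :=
  A j j + ∑ i ∈ Finset.univ.erase j, |A i j|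

/-!
Reweight the L¹ norm by `p i = 1 - δ` on `S₋` and `p i = 1` on `S₀`. For small `δ` every
weighted column sum `p j J_jj + Σ_{i ≠ j} p i |J_ij|` is at most `-ℓ p j` on `Ω`: on `S₋`
the strict negativity of `c_j` absorbs the lost weight, on `S₀` the positive entry `J_{z i}`
is now only counted with weight `1 - δ`, and compactness of `Ω` makes all margins uniform.
Hence one Euler step `a - b + h (f a - f b)` shrinks the weighted distance by `1 - hℓ` (mean
value theorem on the segment `[b, a] ⊆ Ω`), so the weighted distance of two solutions decays
like `exp (-ℓ t)`, and it differs from the L¹ distance by a factor at most `1 + ε` once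
`δ ≤ ε / (1 + ε)`.
-/

open Finset Matrix

lemma IsCompact.exists_pos_le_of_forall_pos {X ι : Type*} [TopologicalSpace X] {K : Set X}
    (hK : IsCompact K) {s : Finset ι} {g : ι → X → ℝ} (hg : ∀ i ∈ s, ContinuousOn (g i) K)
    (hpos : ∀ i ∈ s, ∀ x ∈ K, 0 < g i x) : ∃ c > 0, ∀ i ∈ s, ∀ x ∈ K, c ≤ g i x := by
  have h : ∀ i ∈ s, ∀ᶠ c in 𝓝[>] (0 : ℝ), ∀ x ∈ K, c ≤ g i x := by
    intro i hi
    obtain ⟨c, hc, hle⟩ := hK.exists_forall_le' (hg i hi) (hpos i hi)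
    filter_upwards [Ioc_mem_nhdsGT hc] with c' hc' x hx using hc'.2.trans (hle x hx)
  obtain ⟨c, hc, hc0⟩ := (((eventually_all_finset s).2 h).and self_mem_nhdsWithin).exists
  exact ⟨c, hc0, hc⟩

lemma frequently_slope_lt_of_le_add_isLittleO {g E : ℝ → ℝ} {t K r : ℝ}
    (hE : E =o[𝓝[>] t] fun z => z - t) (hg : ∀ᶠ z in 𝓝[>] t, g z ≤ g t + (z - t) * K + E z)
    (hr : K < r) : ∃ᶠ z in 𝓝[>] t, (z - t)⁻¹ * (g z - g t) < r := by
  have hc : 0 < (r - K) / 2 := by linarith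
  refine Eventually.frequently ?_
  filter_upwards [hg, hE.bound hc, self_mem_nhdsWithin] with z hgz hEz hz
  have hz' : 0 < z - t := sub_pos.2 hz
  rw [Real.norm_eq_abs, Real.norm_eq_abs, abs_of_pos hz'] at hEz
  rw [inv_mul_lt_iff₀ hz']
  nlinarith [le_abs_self (E z)]

section WeightedL1

variable {ι : Type*} [Fintype ι]

def weightedL1Norm (p w : ι → ℝ) : ℝ := ∑ i, p i * |w i|

variable {p : ι → ℝ}

lemma weightedL1Norm_nonneg (hp : 0 ≤ p) (w : ι → ℝ) : 0 ≤ weightedL1Norm p w :=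
  sum_nonneg fun i _ => mul_nonneg (hp i) (abs_nonneg _)

lemma weightedL1Norm_add_le (hp : 0 ≤ p) (v w : ι → ℝ) :
    weightedL1Norm p (v + w) ≤ weightedL1Norm p v + weightedL1Norm p w := by
  simp only [weightedL1Norm, ← sum_add_distrib, ← mul_add]
  exact sum_le_sum fun i _ => mul_le_mul_of_nonneg_left (abs_add_le _ _) (hp i)

lemma weightedL1Norm_le_sum_mul_norm (hp : 0 ≤ p) (w : ι → ℝ) :
    weightedL1Norm p w ≤ (∑ i, p i) * ‖w‖ := by
  rw [weightedL1Norm, sum_mul]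
  exact sum_le_sum fun i _ => mul_le_mul_of_nonneg_left (norm_le_pi_norm w i) (hp i)

lemma weightedL1Norm_le_sum_abs (hp : ∀ i, p i ≤ 1) (w : ι → ℝ) :
    weightedL1Norm p w ≤ ∑ i, |w i| :=
  sum_le_sum fun i _ => mul_le_of_le_one_left (abs_nonneg _) (hp i)

lemma sum_abs_le_mul_weightedL1Norm {c : ℝ} (hp : ∀ i, 1 ≤ c * p i) (w : ι → ℝ) :
    ∑ i, |w i| ≤ c * weightedL1Norm p w := by
  rw [weightedL1Norm, mul_sum]
  exact sum_le_sum fun i _ => by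
    rw [← mul_assoc]; exact le_mul_of_one_le_left (abs_nonneg _) (hp i)

lemma continuous_weightedL1Norm (p : ι → ℝ) : Continuous (weightedL1Norm p) :=
  continuous_finsetSum _ fun i _ => continuous_const.mul (continuous_apply i).abs

lemma sum_mul_sign_mul_le_weightedL1Norm (hp : 0 ≤ p) (v w : ι → ℝ) :
    ∑ i, p i * (SignType.sign (v i) * w i) ≤ weightedL1Norm p w := by
  refine sum_le_sum fun i _ => mul_le_mul_of_nonneg_left ?_ (hp i)
  rcases lt_trichotomy (v i) 0 with h | h | h <;> simp [h, le_abs_self, neg_le_abs]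

lemma weightedL1Norm_eq_sum_mul_sign_mul (w : ι → ℝ) :
    weightedL1Norm p w = ∑ i, p i * (SignType.sign (w i) * w i) := by
  simp [weightedL1Norm]

lemma weightedL1Norm_mulVec_le {B : Matrix ι ι ℝ} {c : ℝ} (hp : 0 ≤ p)
    (hB : ∀ j, ∑ i, p i * |B i j| ≤ c * p j) (w : ι → ℝ) :
    weightedL1Norm p (B *ᵥ w) ≤ c * weightedL1Norm p w := calc
  weightedL1Norm p (B *ᵥ w) ≤ ∑ i, p i * ∑ j, |B i j| * |w j| := by
    refine sum_le_sum fun i _ => mul_le_mul_of_nonneg_left ?_ (hp i)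
    simpa only [mulVec, dotProduct, abs_mul] using
      abs_sum_le_sum_abs (fun j => B i j * w j) univ
  _ = ∑ j, (∑ i, p i * |B i j|) * |w j| := by
    simp only [mul_sum, sum_mul, mul_assoc]; exact sum_comm
  _ ≤ ∑ j, c * p j * |w j| := by gcongr with j; exact hB j
  _ = c * weightedL1Norm p w := by simp only [weightedL1Norm, mul_sum, mul_assoc]

lemma weightedL1Norm_image_sub_le {F : (ι → ℝ) → ι → ℝ}
    {F' : (ι → ℝ) → (ι → ℝ) →L[ℝ] ι → ℝ} {a b : ι → ℝ} {c : ℝ} (hp : 0 ≤ p)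
    (hF : ∀ x ∈ segment ℝ b a, HasFDerivAt F (F' x) x)
    (hF' : ∀ x ∈ segment ℝ b a,
      weightedL1Norm p (F' x (a - b)) ≤ c * weightedL1Norm p (a - b)) :
    weightedL1Norm p (F a - F b) ≤ c * weightedL1Norm p (a - b) := by
  -- pairing with the signs of `F a - F b` turns the weighted norm into a linear functional
  set σ : ι → ℝ := fun i => SignType.sign ((F a - F b) i)
  let L : (ι → ℝ) →L[ℝ] ℝ := ∑ i, (p i * σ i) • ContinuousLinearMap.proj i
  have hL : ∀ y, L y = ∑ i, p i * (σ i * y i) := by simp [L, mul_assoc]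
  set γ : ℝ → ι → ℝ := fun s => b + s • (a - b)
  have hγ : ∀ s ∈ Set.Icc (0 : ℝ) 1, γ s ∈ segment ℝ b a := by
    rw [segment_eq_image']; exact fun s hs => ⟨s, hs, rfl⟩
  have hderiv : ∀ s ∈ Set.Icc (0 : ℝ) 1,
      HasDerivAt (fun s => L (F (γ s))) (L (F' (γ s) (a - b))) s := by
    intro s hs
    have hline : HasDerivAt γ (a - b) s := by
      simpa [γ] using ((hasDerivAt_id s).smul_const (a - b)).const_add b
    exact L.hasFDerivAt.comp_hasDerivAt s ((hF _ (hγ s hs)).comp_hasDerivAt s hline)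
  obtain ⟨ξ, hξ, hslope⟩ := exists_hasDerivAt_eq_slope (fun s => L (F (γ s))) _ zero_lt_one
    (fun s hs => (hderiv s hs).continuousAt.continuousWithinAt)
    (fun s hs => hderiv s (Set.Ioo_subset_Icc_self hs))
  calc weightedL1Norm p (F a - F b) = L (F a - F b) := by
        rw [hL, weightedL1Norm_eq_sum_mul_sign_mul]
    _ = L (F' (γ ξ) (a - b)) := by rw [hslope, map_sub]; simp [γ]
    _ ≤ weightedL1Norm p (F' (γ ξ) (a - b)) :=
        hL _ ▸ sum_mul_sign_mul_le_weightedL1Norm hp _ _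
    _ ≤ c * weightedL1Norm p (a - b) := hF' _ (hγ ξ (Set.Ioo_subset_Icc_self hξ))

lemma weightedL1Norm_le_mul_exp_of_euler_step {x d : ℝ → ι → ℝ} {t₁ ℓ η T : ℝ}
    (hp : 0 ≤ p) (hη : 0 < η) (hx : ∀ t ≥ t₁, HasDerivWithinAt x (d t) (Set.Ici t₁) t)
    (hstep : ∀ t ≥ t₁, ∀ h ∈ Set.Icc 0 η,
      weightedL1Norm p (x t + h • d t) ≤ (1 - h * ℓ) * weightedL1Norm p (x t))
    (hT : t₁ ≤ T) :
    weightedL1Norm p (x T) ≤ weightedL1Norm p (x t₁) * Real.exp (-ℓ * (T - t₁)) := by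
  set g := fun t => weightedL1Norm p (x t)
  have hcont : ContinuousOn g (Set.Icc t₁ T) := fun t ht =>
    (continuous_weightedL1Norm p).continuousAt.comp_continuousWithinAt
      ((hx t ht.1).continuousWithinAt.mono Set.Icc_subset_Ici_self)
  have hslope : ∀ t ∈ Set.Ico t₁ T, ∀ r, -ℓ * g t < r →
      ∃ᶠ z in 𝓝[>] t, (z - t)⁻¹ * (g z - g t) < r := by
    intro t ht r hr
    have hmono : 𝓝[>] t ≤ 𝓝[Set.Ici t₁] t :=
      nhdsWithin_mono t fun z hz => ht.1.trans (le_of_lt hz)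
    set R := fun z => x z - x t - (z - t) • d t
    have hR : (fun z => weightedL1Norm p (R z)) =o[𝓝[>] t] fun z => z - t := by
      refine (Asymptotics.IsBigO.of_bound (∑ i, p i) (Eventually.of_forall fun z => ?_))
        |>.trans_isLittleO ((hasDerivWithinAt_iff_isLittleO.1 (hx t ht.1)).mono hmono)
      rw [Real.norm_of_nonneg (weightedL1Norm_nonneg hp _)]
      exact weightedL1Norm_le_sum_mul_norm hp _
    refine frequently_slope_lt_of_le_add_isLittleO hR ?_ hr
    filter_upwards [Ioo_mem_nhdsGT (show t < t + η by linarith)] with z hz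
    have hh : z - t ∈ Set.Icc 0 η := ⟨by linarith [hz.1], by linarith [hz.2]⟩
    calc g z = weightedL1Norm p ((x t + (z - t) • d t) + R z) := by simp [g, R]
      _ ≤ weightedL1Norm p (x t + (z - t) • d t) + weightedL1Norm p (R z) :=
        weightedL1Norm_add_le hp _ _
      _ ≤ (1 - (z - t) * ℓ) * g t + weightedL1Norm p (R z) := by
        gcongr; exact hstep t ht.1 _ hh
      _ = g t + (z - t) * (-ℓ * g t) + weightedL1Norm p (R z) := by ring
  have := le_gronwallBound_of_liminf_deriv_right_le hcont hslope le_rfl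
    (fun t _ => (add_zero _).ge) T (Set.right_mem_Icc.2 hT)
  rwa [gronwallBound_ε0] at this

variable [DecidableEq ι]

/-- For positive `p` and `P = diagonal p`, `weightedCCol p A j = p j * cCol (P * A * P⁻¹) j`; so
`∀ j, weightedCCol p A j ≤ -ℓ * p j` says that `μ₁ (P * A * P⁻¹) ≤ -ℓ`. -/
def weightedCCol (p : ι → ℝ) (A : Matrix ι ι ℝ) (j : ι) : ℝ :=
  p j * A j j + ∑ i ∈ univ.erase j, p i * |A i j|

lemma sum_mul_abs_one_add_smul {A : Matrix ι ι ℝ} {h : ℝ} (hh : 0 ≤ h)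
    (hA : ∀ i, 0 ≤ 1 + h * A i i) (j : ι) :
    ∑ i, p i * |(1 + h • A) i j| = p j + h * weightedCCol p A j := by
  have hoff : ∀ i ∈ univ.erase j, p i * |(1 + h • A) i j| = h * (p i * |A i j|) := by
    intro i hi
    rw [Matrix.add_apply, Matrix.smul_apply, one_apply_ne (ne_of_mem_erase hi), smul_eq_mul,
      zero_add, abs_mul, abs_of_nonneg hh]
    ring
  rw [← add_sum_erase _ _ (mem_univ j), sum_congr rfl hoff, ← mul_sum, Matrix.add_apply,
    Matrix.smul_apply, one_apply_eq, smul_eq_mul, abs_of_nonneg (hA j), weightedCCol]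
  ring

lemma weightedL1Norm_add_smul_mulVec_le {A : Matrix ι ι ℝ} {h ℓ : ℝ} (hp : 0 ≤ p)
    (hh : 0 ≤ h) (hA : ∀ i, 0 ≤ 1 + h * A i i) (hcol : ∀ j, weightedCCol p A j ≤ -ℓ * p j)
    (w : ι → ℝ) :
    weightedL1Norm p (w + h • A *ᵥ w) ≤ (1 - h * ℓ) * weightedL1Norm p w := by
  rw [show w + h • A *ᵥ w = (1 + h • A) *ᵥ w by rw [add_mulVec, one_mulVec, smul_mulVec]]
  refine weightedL1Norm_mulVec_le hp (fun j => ?_) w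
  rw [sum_mul_abs_one_add_smul hh hA]
  nlinarith [hcol j]

end WeightedL1

section Jacobian

variable {n : ℕ} {f : (Fin n → ℝ) → Fin n → ℝ} {Ω : Set (Fin n → ℝ)} {p : Fin n → ℝ}

lemma fderiv_apply_eq_jac_mulVec (x w : Fin n → ℝ) : fderiv ℝ f x w = jac f x *ᵥ w := by
  have : jac f x = LinearMap.toMatrix' (fderiv ℝ f x : (Fin n → ℝ) →ₗ[ℝ] Fin n → ℝ) := by
    ext i j; simp [jac]
  rw [this, LinearMap.toMatrix'_mulVec]
  rfl

lemma continuous_jac (hf : ContDiff ℝ 1 f) : Continuous (jac f) :=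
  continuous_pi fun i => continuous_pi fun _ => (continuous_apply i).comp
    ((hf.continuous_fderiv one_ne_zero).clm_apply continuous_const)

lemma weightedL1Norm_euler_step_le (hconv : Convex ℝ Ω) (hf : Differentiable ℝ f)
    (hp : 0 ≤ p) {h ℓ : ℝ} (hh : 0 ≤ h) (hdiag : ∀ x ∈ Ω, ∀ i, 0 ≤ 1 + h * jac f x i i)
    (hcol : ∀ x ∈ Ω, ∀ j, weightedCCol p (jac f x) j ≤ -ℓ * p j) {a b : Fin n → ℝ}
    (ha : a ∈ Ω) (hb : b ∈ Ω) :
    weightedL1Norm p (a - b + h • (f a - f b)) ≤ (1 - h * ℓ) * weightedL1Norm p (a - b) := by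
  have key := weightedL1Norm_image_sub_le (F := fun y => y + h • f y)
    (F' := fun x => ContinuousLinearMap.id ℝ _ + h • fderiv ℝ f x) hp
    (fun x _ => (hasFDerivAt_id x).add ((hf x).hasFDerivAt.const_smul h)) (fun x hx => by
      have hxΩ := hconv.segment_subset hb ha hx
      simpa [fderiv_apply_eq_jac_mulVec] using
        weightedL1Norm_add_smul_mulVec_le hp hh (hdiag x hxΩ) (hcol x hxΩ) (a - b))
  convert key using 2
  rw [smul_sub]; abel

lemma weightedL1Norm_sub_le_mul_exp_of_solutions (hconv : Convex ℝ Ω)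
    (hf : Differentiable ℝ f) (hp : 0 ≤ p) {M ℓ : ℝ} (hdiag : ∀ x ∈ Ω, ∀ i, -M ≤ jac f x i i)
    (hcol : ∀ x ∈ Ω, ∀ j, weightedCCol p (jac f x) j ≤ -ℓ * p j) {u v : ℝ → Fin n → ℝ}
    {t₁ T : ℝ} (huΩ : ∀ t ≥ t₁, u t ∈ Ω)
    (hu : ∀ t ≥ t₁, HasDerivWithinAt u (f (u t)) (Set.Ici t₁) t)
    (hvΩ : ∀ t ≥ t₁, v t ∈ Ω) (hv : ∀ t ≥ t₁, HasDerivWithinAt v (f (v t)) (Set.Ici t₁) t)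
    (hT : t₁ ≤ T) :
    weightedL1Norm p (u T - v T)
      ≤ weightedL1Norm p (u t₁ - v t₁) * Real.exp (-ℓ * (T - t₁)) := by
  have hM : 0 < max M 1 := lt_max_of_lt_right one_pos
  refine weightedL1Norm_le_mul_exp_of_euler_step hp (inv_pos.2 hM)
    (fun t ht => (hu t ht).sub (hv t ht)) (fun t ht h hh => ?_) hT
  refine weightedL1Norm_euler_step_le hconv hf hp hh.1 (fun x hx i => ?_) hcol
    (huΩ t ht) (hvΩ t ht)
  have : h * max M 1 ≤ 1 := by simpa [hM.ne'] using mul_le_mul_of_nonneg_right hh.2 hM.le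
  nlinarith [hdiag x hx i, le_max_left M 1, hh.1]

end Jacobian

section ColumnBounds

variable {n : ℕ}

structure UniformColumnBounds (S : Finset (Fin n)) (M a m : ℝ)
    (A : Matrix (Fin n) (Fin n) ℝ) : Prop where
  sum_abs_le : ∀ j, ∑ i, |A i j| ≤ M
  cCol_le_neg : ∀ j ∈ S, cCol A j ≤ -a
  cCol_nonpos : ∀ k ∉ S, cCol A k ≤ 0
  le_sum_abs : ∀ k ∉ S, m ≤ ∑ i ∈ S, |A i k|

namespace UniformColumnBounds

variable {S : Finset (Fin n)} {M a m : ℝ} {A : Matrix (Fin n) (Fin n) ℝ}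

lemma neg_le_diag (hA : UniformColumnBounds S M a m A) (j : Fin n) : -M ≤ A j j :=
  neg_le_of_abs_le <| (single_le_sum (f := fun i => |A i j|) (fun _ _ => abs_nonneg _)
    (mem_univ j)).trans (hA.sum_abs_le j)

lemma weightedCCol_le (hA : UniformColumnBounds S M a m A) {δ ℓ : ℝ} (hδ0 : 0 ≤ δ)
    (hδ1 : δ ≤ 1) (hδ : δ * (2 * M - a) ≤ a) (hℓa : ℓ ≤ a / 2) (hℓm : ℓ ≤ δ * m) (j : Fin n) :
    weightedCCol (fun i => if i ∈ S then 1 - δ else 1) A j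
      ≤ -ℓ * (if j ∈ S then 1 - δ else 1) := by
  by_cases hj : j ∈ S
  · have hoff : ∑ i ∈ univ.erase j, (if i ∈ S then 1 - δ else 1) * |A i j|
        ≤ ∑ i ∈ univ.erase j, |A i j| :=
      sum_le_sum fun _ _ => mul_le_of_le_one_left (abs_nonneg _) (by split_ifs <;> linarith)
    have hcj := hA.cCol_le_neg j hj
    have hdiag := hA.neg_le_diag j
    simp only [weightedCCol, cCol, if_pos hj] at hcj ⊢
    have h1 := mul_le_mul_of_nonneg_right hℓa (sub_nonneg.2 hδ1)
    have h2 := mul_le_mul_of_nonneg_left hdiag hδ0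
    linarith
  · have hsub : S ⊆ univ.erase j := fun i hi =>
      mem_erase.2 ⟨ne_of_mem_of_not_mem hi hj, mem_univ i⟩
    have hoff : ∑ i ∈ univ.erase j, (if i ∈ S then 1 - δ else 1) * |A i j|
        = ∑ i ∈ univ.erase j, |A i j| - δ * ∑ i ∈ S, |A i j| := by
      have hS : ∑ i ∈ S, |A i j| = ∑ i ∈ univ.erase j, if i ∈ S then |A i j| else 0 := by
        rw [sum_ite_mem, inter_eq_right.2 hsub]
      rw [hS, mul_sum, ← sum_sub_distrib]
      exact sum_congr rfl fun i _ => by split_ifs <;> ring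
    have hcj := hA.cCol_nonpos j hj
    have hmj := hA.le_sum_abs j hj
    simp only [weightedCCol, cCol, if_neg hj, hoff] at hcj ⊢
    nlinarith

end UniformColumnBounds

variable {f : (Fin n → ℝ) → Fin n → ℝ} {Ω : Set (Fin n → ℝ)}

lemma exists_uniformColumnBounds_jac (hcomp : IsCompact Ω) (hf : ContDiff ℝ 1 f)
    (S : Finset (Fin n)) (hnonpos : ∀ x ∈ Ω, ∀ k ∉ S, cCol (jac f x) k ≤ 0)
    (hneg : ∀ x ∈ Ω, ∀ j ∈ S, cCol (jac f x) j < 0)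
    (hlink : ∀ x ∈ Ω, ∀ k ∉ S, ∃ z ∈ S, 0 < jac f x z k) :
    ∃ M a m, 0 ≤ M ∧ 0 < a ∧ 0 < m ∧ ∀ x ∈ Ω, UniformColumnBounds S M a m (jac f x) := by
  have hJ := continuous_jac hf
  have habs : ∀ i j, Continuous fun x => |jac f x i j| := fun i j => (hJ.matrix_elem i j).abs
  obtain ⟨M, hM0, hM⟩ : ∃ M, 0 ≤ M ∧ ∀ j, ∀ x ∈ Ω, ∑ i, |jac f x i j| ≤ M := by
    have h : ∀ j, ∀ᶠ M in atTop, ∀ x ∈ Ω, ∑ i, |jac f x i j| ≤ M := fun j => by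
      obtain ⟨M, hM⟩ := hcomp.bddAbove_image
        (continuous_finsetSum _ fun i _ => habs i j).continuousOn
      filter_upwards [eventually_ge_atTop M] with M' hM' x hx using (hM ⟨x, hx, rfl⟩).trans hM'
    exact ((eventually_ge_atTop 0).and (eventually_all.2 h)).exists
  obtain ⟨a, ha, haS⟩ := hcomp.exists_pos_le_of_forall_pos (s := S)
    (g := fun j x => -cCol (jac f x) j)
    (fun j _ => ((hJ.matrix_elem j j).add
      (continuous_finsetSum _ fun i _ => habs i j)).neg.continuousOn)
    (fun j hj x hx => neg_pos.2 (hneg x hx j hj))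
  obtain ⟨m, hm, hmS⟩ := hcomp.exists_pos_le_of_forall_pos (s := Sᶜ)
    (g := fun k x => ∑ i ∈ S, |jac f x i k|)
    (fun k _ => (continuous_finsetSum _ fun i _ => habs i k).continuousOn) (fun k hk x hx => by
      obtain ⟨z, hz, hpos⟩ := hlink x hx k (mem_compl.1 hk)
      exact (abs_pos_of_pos hpos).trans_le
        (single_le_sum (f := fun i => |jac f x i k|) (fun _ _ => abs_nonneg _) hz))
  exact ⟨M, a, m, hM0, ha, hm, fun x hx => ⟨fun j => hM j x hx,
    fun j hj => le_neg_of_le_neg (haS j hj x hx), hnonpos x hx,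
    fun k hk => hmS k (mem_compl.2 hk) x hx⟩⟩

lemma exists_weight_weightedCCol_le (S : Finset (Fin n)) {M a m ε : ℝ} (hM : 0 ≤ M)
    (ha : 0 < a) (hm : 0 < m) (hε : 0 < ε) :
    ∃ p : Fin n → ℝ, ∃ ℓ > 0, (∀ i, 0 ≤ p i ∧ p i ≤ 1 ∧ 1 ≤ (1 + ε) * p i) ∧
      ∀ A, UniformColumnBounds S M a m A → ∀ j, weightedCCol p A j ≤ -ℓ * p j := by
  set δ := min (ε / (1 + ε)) (a / (2 * M + 1))
  have hδ0 : 0 < δ := lt_min (by positivity) (by positivity)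
  have hδε : δ * (1 + ε) ≤ ε := (le_div_iff₀ (by linarith)).1 (min_le_left _ _)
  have hδa : δ * (2 * M + 1) ≤ a := (le_div_iff₀ (by linarith)).1 (min_le_right _ _)
  have hδ1 : δ ≤ 1 := by nlinarith
  refine ⟨fun i => if i ∈ S then 1 - δ else 1, min (δ * m) (a / 2),
    lt_min (by positivity) (by positivity), fun i => ?_, fun A hA j =>
      hA.weightedCCol_le hδ0.le hδ1 (by nlinarith) (min_le_right _ _) (min_le_left _ _) j⟩
  dsimp only
  split_ifs <;> exact ⟨by linarith, by linarith, by nlinarith⟩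

end ColumnBounds

theorem sost_L1_from_column_conditions_general {n : ℕ}
    (Ω : Set (Fin n → ℝ)) (hcomp : IsCompact Ω) (hconv : Convex ℝ Ω)
    (f : (Fin n → ℝ) → (Fin n → ℝ)) (hf : ContDiff ℝ 1 f)
    (S0 Sm : Finset (Fin n))
    (hcover : S0 ∪ Sm = Finset.univ)
    (h1 : ∀ x ∈ Ω, ∀ k ∈ S0, cCol (jac f x) k ≤ 0)
    (h2 : ∀ x ∈ Ω, ∀ j ∈ Sm, cCol (jac f x) j < 0)
    (h3 : ∀ x ∈ Ω, ∀ i ∈ S0, ∃ z ∈ Sm, 0 < jac f x z i) :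
    ∀ ε > (0:ℝ), ∀ τ > (0:ℝ), ∃ ℓ > (0:ℝ), ∀ t₁ ≥ (0:ℝ), ∀ u v : ℝ → (Fin n → ℝ),
      (∀ t ≥ t₁, u t ∈ Ω) → (∀ t ≥ t₁, HasDerivWithinAt u (f (u t)) (Set.Ici t₁) t) →
      (∀ t ≥ t₁, v t ∈ Ω) → (∀ t ≥ t₁, HasDerivWithinAt v (f (v t)) (Set.Ici t₁) t) →
      ∀ t₂ ≥ t₁,
        ∑ i, |u (t₂ + τ) i - v (t₂ + τ) i| ≤
          (1 + ε) * Real.exp (-ℓ * (t₂ - t₁)) * ∑ i, |u t₁ i - v t₁ i| := by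
  intro ε hε τ hτ
  have hcompl : ∀ k ∉ Sm, k ∈ S0 := fun k hk =>
    (mem_union.1 (hcover ▸ mem_univ k)).resolve_right hk
  obtain ⟨M, a, m, hM, ha, hm, hJ⟩ := exists_uniformColumnBounds_jac hcomp hf Sm
    (fun x hx k hk => h1 x hx k (hcompl k hk)) h2 (fun x hx k hk => h3 x hx k (hcompl k hk))
  obtain ⟨p, ℓ, hℓ, hp, hcol⟩ := exists_weight_weightedCCol_le Sm hM ha hm hε
  refine ⟨ℓ, hℓ, fun t₁ _ u v huΩ hu hvΩ hv t₂ ht₂ => ?_⟩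
  have hdecay := weightedL1Norm_sub_le_mul_exp_of_solutions hconv
    (hf.differentiable one_ne_zero) (fun i => (hp i).1) (fun x hx => (hJ x hx).neg_le_diag)
    (fun x hx => hcol _ (hJ x hx)) huΩ hu hvΩ hv (show t₁ ≤ t₂ + τ by linarith)
  calc ∑ i, |u (t₂ + τ) i - v (t₂ + τ) i|
      ≤ (1 + ε) * weightedL1Norm p (u (t₂ + τ) - v (t₂ + τ)) :=
        sum_abs_le_mul_weightedL1Norm (fun i => (hp i).2.2) _
    _ ≤ (1 + ε) * (weightedL1Norm p (u t₁ - v t₁) * Real.exp (-ℓ * (t₂ + τ - t₁))) := by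
        gcongr
    _ ≤ (1 + ε) * ((∑ i, |u t₁ i - v t₁ i|) * Real.exp (-ℓ * (t₂ - t₁))) := by
        gcongr (1 + ε) * (?_ * Real.exp ?_)
        · exact weightedL1Norm_le_sum_abs (fun i => (hp i).2.1) _
        · nlinarith
    _ = (1 + ε) * Real.exp (-ℓ * (t₂ - t₁)) * ∑ i, |u t₁ i - v t₁ i| := by ring

/-- If `{1,…,n}` is partitioned into nonempty sets `S₀`, `S₋` with
`c_k(J(x)) ≤ 0` on `S₀`, `c_j(J(x)) < 0` on `S₋`, and for every `i ∈ S₀` some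
`z ∈ S₋` has `J(x)_{z i} > 0`, then `ẋ = f(x)` is SOST on `Ω` w.r.t. the `L¹` norm. -/
theorem sost_L1_from_column_conditions {n : ℕ}
    (Ω : Set (Fin n → ℝ)) (hcomp : IsCompact Ω) (hconv : Convex ℝ Ω)
    (f : (Fin n → ℝ) → (Fin n → ℝ)) (hf : ContDiff ℝ 1 f)
    (S0 Sm : Finset (Fin n)) (hS0 : S0.Nonempty) (hSm : Sm.Nonempty)
    (hdisj : Disjoint S0 Sm) (hcover : S0 ∪ Sm = Finset.univ)
    (h1 : ∀ x ∈ Ω, ∀ k ∈ S0, cCol (jac f x) k ≤ 0)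
    (h2 : ∀ x ∈ Ω, ∀ j ∈ Sm, cCol (jac f x) j < 0)
    (h3 : ∀ x ∈ Ω, ∀ i ∈ S0, ∃ z ∈ Sm, 0 < jac f x z i) :
    ∀ ε > (0:ℝ), ∀ τ > (0:ℝ), ∃ ℓ > (0:ℝ), ∀ t₁ ≥ (0:ℝ), ∀ u v : ℝ → (Fin n → ℝ),
      (∀ t ≥ t₁, u t ∈ Ω) → (∀ t ≥ t₁, HasDerivWithinAt u (f (u t)) (Set.Ici t₁) t) →
      (∀ t ≥ t₁, v t ∈ Ω) → (∀ t ≥ t₁, HasDerivWithinAt v (f (v t)) (Set.Ici t₁) t) →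
      ∀ t₂ ≥ t₁,
        ∑ i, |u (t₂ + τ) i - v (t₂ + τ) i| ≤
          (1 + ε) * Real.exp (-ℓ * (t₂ - t₁)) * ∑ i, |u t₁ i - v t₁ i| :=
  sost_L1_from_column_conditions_general Ω hcomp hconv f hf S0 Sm hcover h1 h2 h3
end

section
/- Let A ∈ ℝ^{n×n}, and let S₀ and S₋ be nonempty disjoint sets with S₀ ∪ S₋ = {1, …, n}. Suppose that: (1) c_k(A) ≤ 0 for every k ∈ S₀; (2) c_j(A) < 0 for every j ∈ S₋; and (3) for every i ∈ S₀ there exists z = z(i) ∈ S₋ such that A_{z i} > 0. Then for every η ∈ (0, 1) there exists a diagonal matrix D = diag(d₁, …, d_n) with 1 − η ≤ d_i ≤ 1 for all i, such that μ₁(D A D⁻¹) < 0. -/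
open Filter Topology

/-- The matrix measure induced by the `L¹` norm: `μ₁(A) = max_j c_j(A)`. -/
noncomputable def mu1 {n : ℕ} (A : Matrix (Fin n) (Fin n) ℝ) : ℝ :=
  ⨆ j, cCol A j

lemma cCol_conj {n : ℕ} (d : Fin n → ℝ) (hd : ∀ i, 0 < d i)
    (A : Matrix (Fin n) (Fin n) ℝ) (j : Fin n) :
    cCol (Matrix.diagonal d * A * (Matrix.diagonal d)⁻¹) j
      = A j j + (∑ i ∈ Finset.univ.erase j, d i * |A i j|) / d j := by
  have hinv : (Matrix.diagonal d)⁻¹ = Matrix.diagonal (fun i => (d i)⁻¹) := by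
    apply Matrix.inv_eq_right_inv
    rw [Matrix.diagonal_mul_diagonal]
    have : (fun i => d i * (d i)⁻¹) = fun _ => (1:ℝ) :=
      funext fun i => mul_inv_cancel₀ (hd i).ne'
    rw [this, Matrix.diagonal_one]
  have hentry : ∀ i k, (Matrix.diagonal d * A * (Matrix.diagonal d)⁻¹) i k
      = d i * A i k * (d k)⁻¹ := by
    intro i k
    rw [hinv, Matrix.mul_diagonal, Matrix.diagonal_mul]
  unfold cCol
  rw [hentry]
  have hdiag : d j * A j j * (d j)⁻¹ = A j j := by
    rw [mul_comm (d j) (A j j), mul_assoc, mul_inv_cancel₀ (hd j).ne', mul_one]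
  rw [hdiag]
  congr 1
  rw [Finset.sum_div]
  apply Finset.sum_congr rfl
  intro i _
  rw [hentry, abs_mul, abs_mul, abs_of_pos (hd i), abs_of_pos (inv_pos.mpr (hd j))]
  rw [div_eq_mul_inv]

/-- Under the column conditions on `A` w.r.t. a partition `S₀ ∪ S₋` of
`{1,…,n}`, for every `η ∈ (0,1)` there is a diagonal matrix `D = diag(d₁,…,d_n)` with
`1 − η ≤ d_i ≤ 1` such that `μ₁(D A D⁻¹) < 0`. -/
theorem diagonal_scaling_negative_mu1 {n : ℕ}
    (A : Matrix (Fin n) (Fin n) ℝ)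
    (S0 Sm : Finset (Fin n)) (hS0 : S0.Nonempty) (hSm : Sm.Nonempty)
    (hdisj : Disjoint S0 Sm) (hcover : S0 ∪ Sm = Finset.univ)
    (h1 : ∀ k ∈ S0, cCol A k ≤ 0)
    (h2 : ∀ j ∈ Sm, cCol A j < 0)
    (h3 : ∀ i ∈ S0, ∃ z ∈ Sm, 0 < A z i) :
    ∀ η ∈ Set.Ioo (0:ℝ) 1, ∃ d : Fin n → ℝ,
      (∀ i, 1 - η ≤ d i ∧ d i ≤ 1) ∧
      mu1 (Matrix.diagonal d * A * (Matrix.diagonal d)⁻¹) < 0 := by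
  intro η hη
  obtain ⟨hη0, hη1⟩ := hη
  set S : Fin n → ℝ := fun j => ∑ i ∈ S0, |A i j| with hSdef
  have hSnn : ∀ j, 0 ≤ S j := fun j => Finset.sum_nonneg (fun i _ => abs_nonneg _)
  obtain ⟨ε, hεpos, hεη, hε1, key⟩ :
      ∃ ε : ℝ, 0 < ε ∧ ε ≤ η ∧ ε < 1 ∧
        ∀ j ∈ Sm, ε * S j < (1 - ε) * (-cCol A j) := by
    set r : Fin n → ℝ := fun j => (-cCol A j) / (S j - cCol A j) with hrdef
    have hr_pos : ∀ j ∈ Sm, 0 < r j := by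
      intro j hj
      have := h2 j hj
      exact div_pos (by linarith) (by linarith [hSnn j])
    have hinf_pos : 0 < Sm.inf' hSm r := by
      rw [Finset.lt_inf'_iff]; exact hr_pos
    refine ⟨min η (Sm.inf' hSm r) / 2, half_pos (lt_min hη0 hinf_pos), ?_, ?_, ?_⟩
    · have := min_le_left η (Sm.inf' hSm r); linarith
    · have := min_le_left η (Sm.inf' hSm r); linarith
    · intro j hj
      have hc := h2 j hj
      have hden : 0 < S j - cCol A j := by linarith [hSnn j]
      have hlt : min η (Sm.inf' hSm r) / 2 < r j := by
        have h1' := min_le_right η (Sm.inf' hSm r)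
        have h2' := Finset.inf'_le r hj
        linarith
      have := (lt_div_iff₀ hden).mp hlt
      nlinarith
  set d : Fin n → ℝ := fun i => if i ∈ Sm then 1 - ε else 1 with hddef
  have hd_pos : ∀ i, 0 < d i := by
    intro i; rw [hddef]; dsimp only; split <;> linarith
  have hd_le1 : ∀ i, d i ≤ 1 := by
    intro i; rw [hddef]; dsimp only; split <;> linarith
  refine ⟨d, fun i => ⟨?_, hd_le1 i⟩, ?_⟩
  · rw [hddef]; dsimp only; split <;> linarith
  have hcol : ∀ j, cCol (Matrix.diagonal d * A * (Matrix.diagonal d)⁻¹) j < 0 := by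
    intro j
    rw [cCol_conj d hd_pos A j]
    by_cases hj : j ∈ Sm
    · -- j ∈ Sm
      have hj0 : j ∉ S0 := Finset.disjoint_right.mp hdisj hj
      have hdj : d j = 1 - ε := by rw [hddef]; simp [hj]
      have hsplit : ∀ i ∈ Finset.univ.erase j,
          d i * |A i j| ≤ (1 - ε) * |A i j| + (if i ∈ S0 then ε * |A i j| else 0) := by
        intro i _
        by_cases hi : i ∈ Sm
        · have hi0 : i ∉ S0 := Finset.disjoint_right.mp hdisj hi
          have hdi : d i = 1 - ε := by rw [hddef]; simp [hi]
          rw [hdi, if_neg hi0, add_zero]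
        · have hi0 : i ∈ S0 := by
            have := Finset.mem_union.mp (hcover ▸ Finset.mem_univ i)
            tauto
          have hdi : d i = 1 := by rw [hddef]; simp [hi]
          rw [hdi, if_pos hi0, one_mul]
          nlinarith [abs_nonneg (A i j)]
      have hsum1 : ∑ i ∈ Finset.univ.erase j, d i * |A i j|
          ≤ (1 - ε) * (∑ i ∈ Finset.univ.erase j, |A i j|) + ε * S j := by
        calc ∑ i ∈ Finset.univ.erase j, d i * |A i j|
            ≤ ∑ i ∈ Finset.univ.erase j,
                ((1 - ε) * |A i j| + (if i ∈ S0 then ε * |A i j| else 0)) :=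
              Finset.sum_le_sum hsplit
          _ = (1 - ε) * (∑ i ∈ Finset.univ.erase j, |A i j|)
              + ∑ i ∈ Finset.univ.erase j, (if i ∈ S0 then ε * |A i j| else 0) := by
              rw [Finset.sum_add_distrib, Finset.mul_sum]
          _ = (1 - ε) * (∑ i ∈ Finset.univ.erase j, |A i j|) + ε * S j := by
              congr 1
              rw [Finset.sum_ite_mem]
              have heq : Finset.univ.erase j ∩ S0 = S0 := by
                ext i
                simp only [Finset.mem_inter, Finset.mem_erase, Finset.mem_univ, and_true,
                  true_and]
                constructor
                · tauto
                · intro hi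
                  refine ⟨?_, hi⟩
                  rintro rfl; exact hj0 hi
              rw [heq, hSdef, Finset.mul_sum]
      set T : ℝ := ∑ i ∈ Finset.univ.erase j, |A i j| with hT
      have hcj : cCol A j = A j j + T := rfl
      have hkey := key j hj
      rw [hcj] at hkey
      have h1e : (0:ℝ) < 1 - ε := by linarith
      rw [hdj]
      have hstep : ∑ i ∈ Finset.univ.erase j, d i * |A i j|
          < (-(A j j)) * (1 - ε) := by nlinarith
      have hdiv : (∑ i ∈ Finset.univ.erase j, d i * |A i j|) / (1 - ε) < -(A j j) :=
        (div_lt_iff₀ h1e).mpr hstep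
      linarith
    · -- j ∈ S0
      have hj0 : j ∈ S0 := by
        have := Finset.mem_union.mp (hcover ▸ Finset.mem_univ j)
        tauto
      have hdj : d j = 1 := by rw [hddef]; simp [hj]
      obtain ⟨z, hz, hAz⟩ := h3 j hj0
      have hzj : z ≠ j := by
        rintro rfl
        exact (Finset.disjoint_right.mp hdisj hz) hj0
      have hzmem : z ∈ Finset.univ.erase j := Finset.mem_erase.mpr ⟨hzj, Finset.mem_univ z⟩
      have hsplit : ∀ i ∈ Finset.univ.erase j,
          d i * |A i j| ≤ |A i j| - (if i = z then ε * |A i j| else 0) := by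
        intro i _
        by_cases hiz : i = z
        · subst hiz
          have hdi : d i = 1 - ε := by rw [hddef]; simp [hz]
          rw [hdi, if_pos rfl]
          nlinarith [abs_nonneg (A i j)]
        · rw [if_neg hiz, sub_zero]
          nlinarith [abs_nonneg (A i j), hd_le1 i, hd_pos i,
            mul_nonneg (by linarith [hd_le1 i] : (0:ℝ) ≤ 1 - d i) (abs_nonneg (A i j))]
      have hsum1 : ∑ i ∈ Finset.univ.erase j, d i * |A i j|
          ≤ (∑ i ∈ Finset.univ.erase j, |A i j|) - ε * |A z j| := by
        calc ∑ i ∈ Finset.univ.erase j, d i * |A i j|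
            ≤ ∑ i ∈ Finset.univ.erase j, (|A i j| - (if i = z then ε * |A i j| else 0)) :=
              Finset.sum_le_sum hsplit
          _ = (∑ i ∈ Finset.univ.erase j, |A i j|)
              - ∑ i ∈ Finset.univ.erase j, (if i = z then ε * |A i j| else 0) := by
              rw [Finset.sum_sub_distrib]
          _ = (∑ i ∈ Finset.univ.erase j, |A i j|) - ε * |A z j| := by
              congr 1
              rw [Finset.sum_ite_eq' (Finset.univ.erase j) z (fun i => ε * |A i j|)]
              simp [hzmem]
      have hcj : cCol A j = A j j + ∑ i ∈ Finset.univ.erase j, |A i j| := rfl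
      have hc0 := h1 j hj0
      have habs : A z j ≤ |A z j| := le_abs_self _
      rw [hdj, div_one]
      rw [hcj] at hc0
      nlinarith
  haveI hne : Nonempty (Fin n) := ⟨hS0.choose⟩
  obtain ⟨j, hj⟩ := exists_eq_ciSup_of_finite
    (f := fun j => cCol (Matrix.diagonal d * A * (Matrix.diagonal d)⁻¹) j)
  unfold mu1
  rw [← hj]
  exact hcol j
end

section
/- Suppose the system is SWE (separated after small expansion): for each δ > 0 there exists τ₀ > 0 such that |x(t, t₀, a) − x(t, t₀, b)| ≤ (1+δ)|a−b| for all a, b ∈ Ω, all t₀ ≥ 0, and all t ∈ [t₀, t₀+τ₀]. Then the system is SOST on Ω with respect to |·| if and only if it is SO on Ω with respect to |·|. -/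
open Filter Topology

/-- If the system is SWE (separated after small expansion), then it is
SOST on `Ω` w.r.t. `ν` if and only if it is SO on `Ω` w.r.t. `ν`. -/
theorem swe_sost_iff_so {n : ℕ}
    (Ω : Set (Fin n → ℝ))
    (ν : Seminorm ℝ (Fin n → ℝ)) (hνdef : ∀ y, ν y = 0 → y = 0)
    (x : ℝ → ℝ → (Fin n → ℝ) → (Fin n → ℝ))
    (hinit : ∀ t₁ a, 0 ≤ t₁ → a ∈ Ω → x t₁ t₁ a = a)
    -- SWE hypothesis
    (hSWE : ∀ δ > (0:ℝ), ∃ τ₀ > (0:ℝ), ∀ a ∈ Ω, ∀ b ∈ Ω, ∀ t₀ ≥ (0:ℝ),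
      ∀ t ∈ Set.Icc t₀ (t₀ + τ₀),
        ν (x t t₀ a - x t t₀ b) ≤ (1 + δ) * ν (a - b)) :
    -- SOST ↔ SO
    ((∀ ε > (0:ℝ), ∀ τ > (0:ℝ), ∃ ℓ > (0:ℝ), ∀ t₁ t₂ : ℝ, 0 ≤ t₁ → t₁ ≤ t₂ →
        ∀ a ∈ Ω, ∀ b ∈ Ω,
          ν (x (t₂ + τ) t₁ a - x (t₂ + τ) t₁ b) ≤
            (1 + ε) * Real.exp (-ℓ * (t₂ - t₁)) * ν (a - b)) ↔
     (∀ ε > (0:ℝ), ∃ ℓ > (0:ℝ), ∀ t₁ t₂ : ℝ, 0 ≤ t₁ → t₁ ≤ t₂ →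
        ∀ a ∈ Ω, ∀ b ∈ Ω,
          ν (x t₂ t₁ a - x t₂ t₁ b) ≤
            (1 + ε) * Real.exp (-ℓ * (t₂ - t₁)) * ν (a - b))) := by
  constructor
  · -- SOST → SO
    intro hSOST ε hε
    set δ := ε / 2 with hδdef
    have hδ : (0:ℝ) < δ := by positivity
    have hδε : 1 + δ < 1 + ε := by simp only [hδdef]; linarith
    obtain ⟨τ₀, hτ₀, hswe⟩ := hSWE δ hδ
    obtain ⟨ℓ₁, hℓ₁, hsost⟩ := hSOST δ hδ τ₀ hτ₀
    set c := Real.log ((1 + ε) / (1 + δ)) with hc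
    have h1δ : (0:ℝ) < 1 + δ := by linarith
    have h1ε : (0:ℝ) < 1 + ε := by linarith
    have hcpos : 0 < c := Real.log_pos (by rw [lt_div_iff₀ h1δ]; linarith)
    refine ⟨min ℓ₁ (c / τ₀), lt_min hℓ₁ (by positivity), ?_⟩
    intro t₁ t₂ ht₁ h12 a ha b hb
    set ℓ := min ℓ₁ (c / τ₀) with hℓdef
    have hℓpos : 0 < ℓ := lt_min hℓ₁ (by positivity)
    have hℓℓ₁ : ℓ ≤ ℓ₁ := min_le_left _ _
    have hℓτ : ℓ * τ₀ ≤ c := by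
      have h := min_le_right ℓ₁ (c / τ₀)
      calc ℓ * τ₀ ≤ (c / τ₀) * τ₀ := by nlinarith
        _ = c := by field_simp
    have hexpc : Real.exp c = (1 + ε) / (1 + δ) := Real.exp_log (by positivity)
    by_cases hcase : t₂ ≤ t₁ + τ₀
    · have h1 := hswe a ha b hb t₁ ht₁ t₂ ⟨h12, hcase⟩
      have hec : Real.exp (-c) = (1 + δ) / (1 + ε) := by
        rw [Real.exp_neg, hexpc]; field_simp
      have hmono : Real.exp (-c) ≤ Real.exp (-ℓ * (t₂ - t₁)) := by
        apply Real.exp_le_exp.2; nlinarith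
      rw [hec] at hmono
      have h2 : (1 + δ) ≤ (1 + ε) * Real.exp (-ℓ * (t₂ - t₁)) := by
        have : (1 + ε) * ((1 + δ) / (1 + ε)) ≤ (1 + ε) * Real.exp (-ℓ * (t₂ - t₁)) := by
          exact mul_le_mul_of_nonneg_left hmono (le_of_lt h1ε)
        calc (1 + δ) = (1 + ε) * ((1 + δ) / (1 + ε)) := by field_simp
          _ ≤ _ := this
      calc ν (x t₂ t₁ a - x t₂ t₁ b) ≤ (1 + δ) * ν (a - b) := h1
        _ ≤ (1 + ε) * Real.exp (-ℓ * (t₂ - t₁)) * ν (a - b) :=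
              mul_le_mul_of_nonneg_right h2 (apply_nonneg ν _)
    · push_neg at hcase
      have h12' : t₁ ≤ t₂ - τ₀ := by linarith
      have h1 := hsost t₁ (t₂ - τ₀) ht₁ h12' a ha b hb
      rw [sub_add_cancel] at h1
      have hAB : (-ℓ₁ * (t₂ - τ₀ - t₁)) ≤ (-ℓ * (t₂ - t₁)) + c := by
        nlinarith [mul_nonneg (sub_nonneg.2 hℓℓ₁) (by linarith : (0:ℝ) ≤ t₂ - τ₀ - t₁)]
      have h3 : Real.exp (-ℓ₁ * (t₂ - τ₀ - t₁)) ≤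
          Real.exp (-ℓ * (t₂ - t₁)) * ((1 + ε) / (1 + δ)) := by
        rw [← hexpc, ← Real.exp_add]
        exact Real.exp_le_exp.2 hAB
      have key : (1 + δ) * Real.exp (-ℓ₁ * (t₂ - τ₀ - t₁)) ≤
          (1 + ε) * Real.exp (-ℓ * (t₂ - t₁)) := by
        calc (1 + δ) * Real.exp (-ℓ₁ * (t₂ - τ₀ - t₁))
            ≤ (1 + δ) * (Real.exp (-ℓ * (t₂ - t₁)) * ((1 + ε) / (1 + δ))) :=
              mul_le_mul_of_nonneg_left h3 (le_of_lt h1δ)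
          _ = (1 + ε) * Real.exp (-ℓ * (t₂ - t₁)) := by field_simp
      calc ν (x t₂ t₁ a - x t₂ t₁ b)
          ≤ (1 + δ) * Real.exp (-ℓ₁ * (t₂ - τ₀ - t₁)) * ν (a - b) := h1
        _ ≤ (1 + ε) * Real.exp (-ℓ * (t₂ - t₁)) * ν (a - b) :=
              mul_le_mul_of_nonneg_right key (apply_nonneg ν _)
  · -- SO → SOST
    intro hSO ε hε τ hτ
    obtain ⟨ℓ, hℓ, hso⟩ := hSO ε hε
    refine ⟨ℓ, hℓ, ?_⟩
    intro t₁ t₂ ht₁ h12 a ha b hb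
    have h1 := hso t₁ (t₂ + τ) ht₁ (by linarith) a ha b hb
    have h2 : Real.exp (-ℓ * (t₂ + τ - t₁)) ≤ Real.exp (-ℓ * (t₂ - t₁)) := by
      apply Real.exp_le_exp.2; nlinarith
    calc ν (x (t₂ + τ) t₁ a - x (t₂ + τ) t₁ b)
        ≤ (1 + ε) * Real.exp (-ℓ * (t₂ + τ - t₁)) * ν (a - b) := h1
      _ ≤ (1 + ε) * Real.exp (-ℓ * (t₂ - t₁)) * ν (a - b) :=
            mul_le_mul_of_nonneg_right
              (mul_le_mul_of_nonneg_left h2 (by linarith)) (apply_nonneg ν _)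
end

section
/- Suppose that for every x₀ ∈ Ω and every t > 0 one has φ(t, x₀) ∉ ∂Ω (the boundary of Ω). Then for each τ > 0 there exists d = d(τ) > 0 such that dist(φ(t, x₀), ∂Ω) ≥ d for all x₀ ∈ Ω and all t ≥ τ, where dist denotes Euclidean distance to the set ∂Ω. -/
open Filter Topology

/-- If every trajectory leaves the boundary instantly (`φ(t,x₀) ∉ ∂Ω` for
all `x₀ ∈ Ω` and `t > 0`), then for each `τ > 0` there is `d = d(τ) > 0` with
`dist(φ(t,x₀), ∂Ω) ≥ d` for all `x₀ ∈ Ω` and `t ≥ τ`. -/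
theorem trajectories_uniformly_away_from_boundary {n : ℕ}
    (Ω : Set (EuclideanSpace ℝ (Fin n))) (hcomp : IsCompact Ω)
    (hfr : (frontier Ω).Nonempty)
    (φ : ℝ → EuclideanSpace ℝ (Fin n) → EuclideanSpace ℝ (Fin n))
    (hφmem : ∀ t ≥ (0:ℝ), ∀ a ∈ Ω, φ t a ∈ Ω)
    (hφ0 : ∀ a ∈ Ω, φ 0 a = a)
    (hφgrp : ∀ t ≥ (0:ℝ), ∀ s ≥ (0:ℝ), ∀ a ∈ Ω, φ (t + s) a = φ t (φ s a))
    (hφcont : ContinuousOn (fun p : ℝ × EuclideanSpace ℝ (Fin n) => φ p.1 p.2)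
      (Set.Ici 0 ×ˢ Ω))
    (hbd : ∀ x₀ ∈ Ω, ∀ t > (0:ℝ), φ t x₀ ∉ frontier Ω) :
    ∀ τ > (0:ℝ), ∃ d > (0:ℝ), ∀ x₀ ∈ Ω, ∀ t ≥ τ,
      d ≤ Metric.infDist (φ t x₀) (frontier Ω) := by
  intro τ hτ
  rcases Ω.eq_empty_or_nonempty with h | hne
  · exact ⟨1, one_pos, fun x₀ hx => by simp [h] at hx⟩
  · -- K = φ τ '' Ω is compact, nonempty, disjoint from frontier
    have hcontτ : ContinuousOn (fun x => φ τ x) Ω := by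
      have : ContinuousOn (fun x : EuclideanSpace ℝ (Fin n) => (τ, x))
          Ω := (continuous_const.prodMk continuous_id).continuousOn
      exact hφcont.comp this (fun x hx => ⟨le_of_lt hτ, hx⟩)
    have hK : IsCompact ((fun x => φ τ x) '' Ω) := hcomp.image_of_continuousOn hcontτ
    have hKne : ((fun x => φ τ x) '' Ω).Nonempty := hne.image _
    have hcontf : ContinuousOn (fun y => Metric.infDist y (frontier Ω))
        ((fun x => φ τ x) '' Ω) :=
      (Metric.continuous_infDist_pt _).continuousOn
    obtain ⟨y, hyK, hymin⟩ := hK.exists_isMinOn hKne hcontf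
    have hypos : 0 < Metric.infDist y (frontier Ω) := by
      obtain ⟨x, hx, rfl⟩ := hyK
      exact (isClosed_frontier.notMem_iff_infDist_pos hfr).1 (hbd x hx τ hτ)
    refine ⟨Metric.infDist y (frontier Ω), hypos, fun x₀ hx₀ t ht => ?_⟩
    have hts : t = τ + (t - τ) := by ring
    have h1 : (0:ℝ) ≤ t - τ := by linarith
    have h2 : φ t x₀ = φ τ (φ (t - τ) x₀) := by
      conv_lhs => rw [hts]
      exact hφgrp τ hτ.le (t - τ) h1 x₀ hx₀
    have : φ t x₀ ∈ (fun x => φ τ x) '' Ω :=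
      ⟨φ (t - τ) x₀, hφmem (t - τ) h1 x₀ hx₀, h2.symm⟩
    exact hymin this
end

section
/- Suppose the time-invariant system ẋ = f(x) is interior contractive (IC) with respect to some norm |·|: (a) for every x₀ ∈ ∂Ω (the boundary of Ω) and every t > 0, φ(t, x₀) ∉ ∂Ω; and (b) μ(J(x)) < 0 for every x in the interior of Ω, where μ is the matrix measure induced by |·|. Then the system admits a unique equilibrium point e ∈ Ω (i.e., a unique e with f(e) = 0), this e lies in the interior of Ω, and φ(t, a) → e as t → ∞ for every a ∈ Ω. -/
/-!
Negativity of the matrix measure of `jac f` along the segment joining two interior points, made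
uniform by compactness of the segment, turns the mean value inequality into the estimate
`ν (y - z + h • (f y - f z)) ≤ (1 + h κ) ν (y - z)` with `κ < 0` for small `h > 0`. Along two
trajectories that stay in the convex set `interior Ω`, this makes their `ν`-distance
nonincreasing, and strictly decreasing near any instant at which they differ.

Boundary repulsion sends every trajectory into the interior for good. If `w` is a cluster point of
the trajectory of `a`, then `ν (φ (σ + s) w - φ σ w)` is the limit of the nonincreasing function
`t ↦ ν (φ (t + s) a - φ t a)`, so it is nondecreasing in `σ`. The strict decrease forces it to
vanish: `w` is a fixed point of the flow, hence an equilibrium, and the trajectory of `a`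
converges to it since its distance to `w` is nonincreasing.
Two interior equilibria coincide by the contraction estimate, and an equilibrium in `Ω` stays
fixed under the flow by uniqueness of solutions of the ODE, so it lies in the interior.
-/

open Filter Topology

/-- The operator norm on `n × n` matrices induced by the vector norm `ν`. -/
noncomputable def opNorm {n : ℕ} (ν : Seminorm ℝ (Fin n → ℝ))
    (A : Matrix (Fin n) (Fin n) ℝ) : ℝ :=
  sSup {r : ℝ | ∃ y : Fin n → ℝ, ν y ≤ 1 ∧ r = ν (A.mulVec y)}

open Set
open scoped Matrix

theorem slope_le_of_le_add_mul {g : ℝ → ℝ} {t z q : ℝ} (hz : t < z)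
    (h : g z ≤ g t + (z - t) * q) : slope g t z ≤ q := by
  rw [slope_def_field, div_le_iff₀ (sub_pos.mpr hz)]
  linarith

theorem monotoneOn_of_tendsto_comp_add {g D : ℝ → ℝ} {T : ℝ} (hg : AntitoneOn g (Ici T))
    {l : Filter ℝ} [NeBot l] (hl : l ≤ atTop)
    (hD : ∀ σ ≥ (0 : ℝ), Tendsto (fun t => g (t + σ)) l (𝓝 (D σ))) : MonotoneOn D (Ici 0) := by
  intro σ (hσ : 0 ≤ σ) σ' (hσ' : 0 ≤ σ') hle
  refine ge_of_tendsto (hD σ' hσ') ?_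
  filter_upwards [hl (eventually_ge_atTop T)] with t ht
  refine le_of_tendsto (hD σ hσ) ?_
  filter_upwards [hl (eventually_ge_atTop (t + σ' - σ))] with s hs
  exact hg (show T ≤ t + σ' by linarith) (show T ≤ s + σ by linarith) (by linarith)

theorem AntitoneOn.tendsto_atTop_of_tendsto {g : ℝ → ℝ} {T L : ℝ} (hg : AntitoneOn g (Ici T))
    {l : Filter ℝ} [NeBot l] (hl : l ≤ atTop) (h : Tendsto g l (𝓝 L)) :
    Tendsto g atTop (𝓝 L) := by
  refine tendsto_order.mpr ⟨fun b hb => ?_, fun b hb => ?_⟩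
  · filter_upwards [eventually_ge_atTop T] with t ht
    refine hb.trans_le (le_of_tendsto h ?_)
    filter_upwards [hl (eventually_ge_atTop t)] with s hs
    exact hg (show T ≤ t from ht) (show T ≤ s by linarith) hs
  · obtain ⟨t₀, ht₀b, ht₀⟩ := ((h.eventually (eventually_lt_nhds hb)).and
      (hl (eventually_ge_atTop T))).exists
    filter_upwards [eventually_ge_atTop t₀] with t ht
    exact (hg (show T ≤ t₀ from ht₀) (show T ≤ t by linarith) ht).trans_lt ht₀b

section Seminorm

variable {E F : Type*} [NormedAddCommGroup E] [NormedSpace ℝ E]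
  [NormedAddCommGroup F] [NormedSpace ℝ F]

theorem Seminorm.continuous_of_finiteDimensional [FiniteDimensional ℝ E] (ν : Seminorm ℝ E) :
    Continuous ν :=
  continuousOn_univ.mp (ν.convexOn.continuousOn isOpen_univ)

theorem Seminorm.exists_pos_mul_norm_le [FiniteDimensional ℝ E] {ν : Seminorm ℝ E}
    (hνdef : ∀ x, ν x = 0 → x = 0) : ∃ c > 0, ∀ x, c * ‖x‖ ≤ ν x := by
  rcases subsingleton_or_nontrivial E with hE | hE
  · exact ⟨1, one_pos, fun x => by simp [Subsingleton.elim x 0]⟩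
  obtain ⟨x₀, hx₀, hmin⟩ := (isCompact_sphere (0 : E) 1).exists_isMinOn
    (NormedSpace.sphere_nonempty.mpr zero_le_one) ν.continuous_of_finiteDimensional.continuousOn
  have hx₀ne : x₀ ≠ 0 := ne_zero_of_mem_unit_sphere ⟨x₀, hx₀⟩
  refine ⟨ν x₀, (apply_nonneg ν x₀).lt_of_ne (fun h => hx₀ne (hνdef x₀ h.symm)), fun x => ?_⟩
  rcases eq_or_ne x 0 with rfl | hx
  · simp
  have hxpos : 0 < ‖x‖ := norm_pos_iff.mpr hx
  have hmem : ‖x‖⁻¹ • x ∈ Metric.sphere (0 : E) 1 := by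
    simp [norm_smul, hxpos.ne']
  calc ν x₀ * ‖x‖ ≤ ν (‖x‖⁻¹ • x) * ‖x‖ := by gcongr; exact hmin hmem
    _ = ν x := by rw [map_smul_eq_mul, norm_inv, norm_norm]; field_simp

theorem Seminorm.tendsto_of_tendsto_apply_sub [FiniteDimensional ℝ E] {ν : Seminorm ℝ E}
    (hνdef : ∀ x, ν x = 0 → x = 0) {ι : Type*} {l : Filter ι} {x : ι → E} {w : E}
    (h : Tendsto (fun i => ν (x i - w)) l (𝓝 0)) : Tendsto x l (𝓝 w) := by
  obtain ⟨c, hc, hcν⟩ := Seminorm.exists_pos_mul_norm_le hνdef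
  rw [tendsto_iff_norm_sub_tendsto_zero]
  refine squeeze_zero (fun _ => norm_nonneg _) (fun i => ?_) (by simpa using h.const_mul c⁻¹)
  rw [le_inv_mul_iff₀ hc]
  exact hcν _

theorem Seminorm.eventually_le_of_hasDerivWithinAt {ν : Seminorm ℝ E} (hν : Continuous ν)
    {γ : ℝ → E} {γ' : E} {t : ℝ} (hγ : HasDerivWithinAt γ γ' (Ici t) t) {ε : ℝ} (hε : 0 < ε) :
    ∀ᶠ z in 𝓝[>] t, ν (γ z) ≤ ν (γ t + (z - t) • γ') + (z - t) * ε := by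
  have hslope : Tendsto (fun z => ν (slope γ t z - γ')) (𝓝[>] t) (𝓝 0) := by
    have := ((hasDerivWithinAt_iff_tendsto_slope' self_notMem_Ioi).mp hγ.Ioi_of_Ici).sub_const γ'
    simpa [Function.comp_def] using (hν.tendsto 0).comp (by simpa using this)
  filter_upwards [hslope.eventually (eventually_lt_nhds hε), self_mem_nhdsWithin] with z hz hzt
  have hzt : 0 < z - t := sub_pos.mpr hzt
  have hdecomp : γ z = (γ t + (z - t) • γ') + (z - t) • (slope γ t z - γ') := by
    rw [smul_sub, slope_def_module, smul_inv_smul₀ hzt.ne']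
    abel
  calc ν (γ z) ≤ ν (γ t + (z - t) • γ') + ν ((z - t) • (slope γ t z - γ')) := by
        rw [hdecomp]; exact map_add_le_add ν _ _
    _ ≤ ν (γ t + (z - t) • γ') + (z - t) * ε := by
        rw [map_smul_eq_mul, Real.norm_of_nonneg hzt.le]
        gcongr

theorem Seminorm.apply_sub_le_of_fderiv_le {ν : Seminorm ℝ E} (hν : Continuous ν) {g : F → E}
    {y z : F} (hg : ∀ x ∈ segment ℝ z y, DifferentiableAt ℝ g x) {R : ℝ}
    (hR : ∀ x ∈ segment ℝ z y, ν (fderiv ℝ g x (y - z)) ≤ R) : ν (g y - g z) ≤ R := by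
  set p : ℝ → F := fun s => z + s • (y - z)
  have hp : ∀ s ∈ Icc (0 : ℝ) 1, p s ∈ segment ℝ z y := fun s hs => by
    rw [segment_eq_image']; exact ⟨s, hs, rfl⟩
  have hγ : ∀ s ∈ Icc (0 : ℝ) 1,
      HasDerivAt (fun s => g (p s) - g z) (fderiv ℝ g (p s) (y - z)) s := fun s hs => by
    have hp' : HasDerivAt p (y - z) s := by
      simpa only [one_smul] using ((hasDerivAt_id' s).smul_const (y - z)).const_add z
    exact ((hg _ (hp s hs)).hasFDerivAt.comp_hasDerivAt s hp').sub_const (g z)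
  have key := image_le_of_liminf_slope_right_le_deriv_boundary
    (f := fun s => ν (g (p s) - g z)) (B := fun s => s * R) (B' := fun _ => R)
    (hν.comp_continuousOn fun s hs => (hγ s hs).continuousAt.continuousWithinAt)
    (by simp [p]) (continuous_id.mul continuous_const).continuousOn
    (fun s _ => by simpa using ((hasDerivAt_id s).mul_const R).hasDerivWithinAt)
    (fun x hx r hr => by
      refine Eventually.frequently ?_
      filter_upwards [ν.eventually_le_of_hasDerivWithinAt hν
        (hγ x (Ico_subset_Icc_self hx)).hasDerivWithinAt (half_pos (sub_pos.mpr hr)),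
        self_mem_nhdsWithin] with s hs hxs
      refine (slope_le_of_le_add_mul hxs ?_).trans_lt (by linarith : R + (r - R) / 2 < r)
      have hsx : 0 ≤ s - x := (sub_pos.mpr hxs).le
      calc ν (g (p s) - g z)
          ≤ ν (g (p x) - g z + (s - x) • fderiv ℝ g (p x) (y - z)) + (s - x) * ((r - R) / 2) := hs
        _ ≤ ν (g (p x) - g z) + (s - x) * R + (s - x) * ((r - R) / 2) := by
          grw [map_add_le_add, map_smul_eq_mul, Real.norm_of_nonneg hsx,
            hR _ (hp x (Ico_subset_Icc_self hx))]
        _ = ν (g (p x) - g z) + (s - x) * (R + (r - R) / 2) := by ring)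
    (right_mem_Icc.mpr zero_le_one)
  simpa [p] using key

end Seminorm

section MatrixMeasure

variable {n : ℕ} {ν : Seminorm ℝ (Fin n → ℝ)}

theorem jac_mulVec (f : (Fin n → ℝ) → (Fin n → ℝ)) (x v : Fin n → ℝ) :
    jac f x *ᵥ v = fderiv ℝ f x v := by
  have : jac f x = LinearMap.toMatrix' (fderiv ℝ f x : (Fin n → ℝ) →ₗ[ℝ] (Fin n → ℝ)) := by
    ext i j; simp [jac, LinearMap.toMatrix'_apply]
  rw [this, ← Matrix.toLin'_apply, Matrix.toLin'_toMatrix']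
  rfl

theorem opNorm_bddAbove (hνdef : ∀ y, ν y = 0 → y = 0) (A : Matrix (Fin n) (Fin n) ℝ) :
    BddAbove {r : ℝ | ∃ y : Fin n → ℝ, ν y ≤ 1 ∧ r = ν (A *ᵥ y)} := by
  obtain ⟨c, hc, hcν⟩ := Seminorm.exists_pos_mul_norm_le hνdef
  obtain ⟨C, hC, hCA⟩ := (ν.comp A.mulVecLin).bound_of_continuous_normedSpace
    (Seminorm.continuous_of_finiteDimensional _)
  refine ⟨C / c, ?_⟩
  rintro _ ⟨y, hy, rfl⟩
  have hy' : ‖y‖ ≤ 1 / c := by rw [le_div_iff₀ hc, mul_comm]; exact (hcν y).trans hy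
  calc ν (A *ᵥ y) ≤ C * ‖y‖ := hCA y
    _ ≤ C * (1 / c) := by gcongr
    _ = C / c := by ring

theorem opNorm_nonneg (hνdef : ∀ y, ν y = 0 → y = 0) (A : Matrix (Fin n) (Fin n) ℝ) :
    0 ≤ opNorm ν A :=
  le_csSup (opNorm_bddAbove hνdef A) ⟨0, by simp, by simp⟩

theorem apply_mulVec_le_opNorm_mul (hνdef : ∀ y, ν y = 0 → y = 0) (A : Matrix (Fin n) (Fin n) ℝ)
    (y : Fin n → ℝ) : ν (A *ᵥ y) ≤ opNorm ν A * ν y := by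
  rcases (apply_nonneg ν y).eq_or_lt with hy | hy
  · simp [hνdef y hy.symm]
  have hunit : ν ((ν y)⁻¹ • y) ≤ 1 := by
    rw [map_smul_eq_mul, Real.norm_of_nonneg (inv_nonneg.mpr hy.le), inv_mul_cancel₀ hy.ne']
  have hle := le_csSup (opNorm_bddAbove hνdef A) ⟨_, hunit, rfl⟩
  rw [Matrix.mulVec_smul, map_smul_eq_mul, Real.norm_of_nonneg (inv_nonneg.mpr hy.le),
    inv_mul_le_iff₀ hy] at hle
  rwa [opNorm, mul_comm]

theorem opNorm_le_of_forall_le {A : Matrix (Fin n) (Fin n) ℝ} {K : ℝ} (hK : 0 ≤ K)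
    (h : ∀ y, ν (A *ᵥ y) ≤ K * ν y) : opNorm ν A ≤ K := by
  refine csSup_le ⟨0, 0, by simp, by simp⟩ ?_
  rintro _ ⟨y, hy, rfl⟩
  exact (h y).trans (mul_le_of_le_one_right hK hy)

theorem opNorm_one_add_smul_le (hνdef : ∀ y, ν y = 0 → y = 0) (A B : Matrix (Fin n) (Fin n) ℝ)
    {h : ℝ} (hh : 0 ≤ h) :
    opNorm ν (1 + h • B) ≤ opNorm ν (1 + h • A) + h * opNorm ν (B - A) := by
  have h₁ := opNorm_nonneg hνdef (1 + h • A)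
  have h₂ := opNorm_nonneg hνdef (B - A)
  refine opNorm_le_of_forall_le (by positivity) fun y => ?_
  have hsplit : (1 + h • B) *ᵥ y = (1 + h • A) *ᵥ y + h • ((B - A) *ᵥ y) := by
    simp only [Matrix.add_mulVec, Matrix.smul_mulVec, Matrix.sub_mulVec, smul_sub]
    abel
  calc ν ((1 + h • B) *ᵥ y) ≤ ν ((1 + h • A) *ᵥ y) + h * ν ((B - A) *ᵥ y) := by
        rw [hsplit]
        grw [map_add_le_add, map_smul_eq_mul, Real.norm_of_nonneg hh]
    _ ≤ opNorm ν (1 + h • A) * ν y + h * (opNorm ν (B - A) * ν y) := by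
        grw [apply_mulVec_le_opNorm_mul hνdef, apply_mulVec_le_opNorm_mul hνdef]
    _ = (opNorm ν (1 + h • A) + h * opNorm ν (B - A)) * ν y := by ring

theorem tendsto_opNorm_jac_sub (hνdef : ∀ y, ν y = 0 → y = 0) {f : (Fin n → ℝ) → (Fin n → ℝ)}
    (hf : ContDiff ℝ 1 f) (x : Fin n → ℝ) :
    Tendsto (fun y => opNorm ν (jac f y - jac f x)) (𝓝 x) (𝓝 0) := by
  obtain ⟨c, hc, hcν⟩ := Seminorm.exists_pos_mul_norm_le hνdef
  obtain ⟨C, hC, hCν⟩ := ν.bound_of_continuous_normedSpace ν.continuous_of_finiteDimensional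
  have hbound : ∀ y, opNorm ν (jac f y - jac f x) ≤ C / c * ‖fderiv ℝ f y - fderiv ℝ f x‖ :=
    fun y => opNorm_le_of_forall_le (by positivity) fun v => by
      rw [Matrix.sub_mulVec, jac_mulVec, jac_mulVec, ← sub_apply]
      calc ν ((fderiv ℝ f y - fderiv ℝ f x) v) ≤ C * (‖fderiv ℝ f y - fderiv ℝ f x‖ * ‖v‖) := by
            grw [hCν, ContinuousLinearMap.le_opNorm]
        _ ≤ C * (‖fderiv ℝ f y - fderiv ℝ f x‖ * (ν v / c)) := by
            gcongr; rw [le_div_iff₀ hc, mul_comm]; exact hcν v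
        _ = C / c * ‖fderiv ℝ f y - fderiv ℝ f x‖ * ν v := by ring
  have hD : Tendsto (fun y => C / c * ‖fderiv ℝ f y - fderiv ℝ f x‖) (𝓝 x) (𝓝 0) := by
    simpa using (((hf.continuous_fderiv one_ne_zero).tendsto x).sub_const
      (fderiv ℝ f x)).norm.const_mul (C / c)
  exact squeeze_zero (fun y => opNorm_nonneg hνdef _) hbound hD

/-- A uniform-in-`y` version of `μ (A y) < 0`, stated through the difference quotients
that define the matrix measure. -/
def UniformlyNegMatrixMeasureOn {X : Type*} (ν : Seminorm ℝ (Fin n → ℝ))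
    (A : X → Matrix (Fin n) (Fin n) ℝ) (S : Set X) : Prop :=
  ∃ κ < 0, ∀ᶠ h in 𝓝[>] (0 : ℝ), ∀ y ∈ S, opNorm ν (1 + h • A y) ≤ 1 + h * κ

variable {X : Type*} [TopologicalSpace X] {A : X → Matrix (Fin n) (Fin n) ℝ}

theorem exists_mem_nhds_uniformlyNegMatrixMeasureOn (hνdef : ∀ y, ν y = 0 → y = 0) {x : X}
    (hA : Tendsto (fun y => opNorm ν (A y - A x)) (𝓝 x) (𝓝 0)) {m : ℝ} (hm : m < 0)
    (hμ : Tendsto (fun h : ℝ => (opNorm ν (1 + h • A x) - 1) / h) (𝓝[>] 0) (𝓝 m)) :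
    ∃ U ∈ 𝓝 x, UniformlyNegMatrixMeasureOn ν A U := by
  refine ⟨{y | opNorm ν (A y - A x) < -m / 4}, hA.eventually (eventually_lt_nhds (by linarith)),
    m / 4, by linarith, ?_⟩
  filter_upwards [hμ.eventually (eventually_lt_nhds (by linarith : m < m / 2)),
    self_mem_nhdsWithin] with h hq (hh : 0 < h) y (hy : opNorm ν (A y - A x) < -m / 4)
  rw [div_lt_iff₀ hh] at hq
  calc opNorm ν (1 + h • A y) ≤ opNorm ν (1 + h • A x) + h * opNorm ν (A y - A x) :=
        opNorm_one_add_smul_le hνdef _ _ hh.le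
    _ ≤ 1 + h * (m / 4) := by nlinarith [mul_lt_mul_of_pos_left hy hh]

theorem IsCompact.uniformlyNegMatrixMeasureOn {K : Set X} (hK : IsCompact K)
    (hloc : ∀ x ∈ K, ∃ U ∈ 𝓝 x, UniformlyNegMatrixMeasureOn ν A U) :
    UniformlyNegMatrixMeasureOn ν A K := by
  refine hK.induction_on ?_ ?_ ?_ ?_
  · exact ⟨-1, by norm_num, Eventually.of_forall fun _ _ hy => hy.elim⟩
  · rintro s t hst ⟨κ, hκ, hev⟩
    exact ⟨κ, hκ, hev.mono fun h hh y hy => hh y (hst hy)⟩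
  · rintro s t ⟨κ₁, hκ₁, hev₁⟩ ⟨κ₂, hκ₂, hev₂⟩
    refine ⟨max κ₁ κ₂, max_lt hκ₁ hκ₂, ?_⟩
    filter_upwards [hev₁, hev₂, self_mem_nhdsWithin] with h h₁ h₂ (hh : 0 < h) y hy
    rcases hy with hy | hy
    · exact (h₁ y hy).trans (by gcongr; exact le_max_left _ _)
    · exact (h₂ y hy).trans (by gcongr; exact le_max_right _ _)
  · intro x hx
    obtain ⟨U, hU, hAU⟩ := hloc x hx
    exact ⟨U, mem_nhdsWithin_of_mem_nhds hU, hAU⟩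

end MatrixMeasure

section Contraction

variable {E : Type*} [NormedAddCommGroup E] [NormedSpace ℝ E]

def StrictlyContractingOn (ν : Seminorm ℝ E) (f : E → E) (U : Set E) : Prop :=
  ∀ y ∈ U, ∀ z ∈ U, ∃ κ < 0,
    ∀ᶠ h in 𝓝[>] (0 : ℝ), ν (y - z + h • (f y - f z)) ≤ (1 + h * κ) * ν (y - z)

theorem StrictlyContractingOn.eq_of_apply_eq_zero {ν : Seminorm ℝ E} {f : E → E} {U : Set E}
    (hU : StrictlyContractingOn ν f U) (hνdef : ∀ x, ν x = 0 → x = 0) {y z : E} (hy : y ∈ U)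
    (hz : z ∈ U) (hfy : f y = 0) (hfz : f z = 0) : y = z := by
  obtain ⟨κ, hκ, hev⟩ := hU y hy z hz
  obtain ⟨h, hh, (hpos : 0 < h)⟩ := (hev.and self_mem_nhdsWithin).exists
  rw [hfy, hfz, sub_zero, smul_zero, add_zero] at hh
  have : ν (y - z) ≤ 0 := by nlinarith [mul_neg_of_pos_of_neg hpos hκ, apply_nonneg ν (y - z)]
  exact sub_eq_zero.mp (hνdef _ (this.antisymm (apply_nonneg ν _)))

end Contraction

theorem strictlyContractingOn_of_matrixMeasure_neg {n : ℕ} {ν : Seminorm ℝ (Fin n → ℝ)}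
    (hνdef : ∀ y, ν y = 0 → y = 0) {f : (Fin n → ℝ) → (Fin n → ℝ)} (hf : ContDiff ℝ 1 f)
    {μ : Matrix (Fin n) (Fin n) ℝ → ℝ}
    (hμ : ∀ A : Matrix (Fin n) (Fin n) ℝ,
      Tendsto (fun ε : ℝ => (opNorm ν (1 + ε • A) - 1) / ε) (𝓝[>] 0) (𝓝 (μ A)))
    {U : Set (Fin n → ℝ)} (hU : Convex ℝ U) (hneg : ∀ x ∈ U, μ (jac f x) < 0) :
    StrictlyContractingOn ν f U := by
  intro y hy z hz
  have hseg : segment ℝ z y ⊆ U := hU.segment_subset hz hy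
  have hcompact : IsCompact (segment ℝ z y) := by
    rw [segment_eq_image']; exact isCompact_Icc.image (by fun_prop)
  obtain ⟨κ, hκ, hev⟩ := hcompact.uniformlyNegMatrixMeasureOn fun x hx =>
    exists_mem_nhds_uniformlyNegMatrixMeasureOn hνdef (tendsto_opNorm_jac_sub hνdef hf x)
      (hneg x (hseg hx)) (hμ _)
  refine ⟨κ, hκ, ?_⟩
  filter_upwards [hev] with h hh
  have hdiff : Differentiable ℝ f := hf.differentiable one_ne_zero
  have hderiv : ∀ x v, fderiv ℝ (fun x => x + h • f x) x v = (1 + h • jac f x) *ᵥ v := by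
    intro x v
    have hD : HasFDerivAt (fun x => x + h • f x)
        (ContinuousLinearMap.id ℝ _ + h • fderiv ℝ f x) x :=
      (hasFDerivAt_id x).add ((hdiff x).hasFDerivAt.const_smul h)
    rw [hD.fderiv]
    simp [Matrix.add_mulVec, Matrix.smul_mulVec, jac_mulVec]
  calc ν (y - z + h • (f y - f z)) = ν ((y + h • f y) - (z + h • f z)) := by
        congr 1; module
    _ ≤ (1 + h * κ) * ν (y - z) := by
        refine ν.apply_sub_le_of_fderiv_le (g := fun x => x + h • f x)
          ν.continuous_of_finiteDimensional (fun x _ => by fun_prop) fun x hx => ?_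
        rw [hderiv]
        exact (apply_mulVec_le_opNorm_mul hνdef _ _).trans
          (mul_le_mul_of_nonneg_right (hh x hx) (apply_nonneg ν _))

section Flow

variable {E : Type*} [NormedAddCommGroup E] [NormedSpace ℝ E]

structure IsSemiflowOf (f : E → E) (φ : ℝ → E → E) (Ω : Set E) : Prop where
  mapsTo : ∀ t ≥ (0 : ℝ), ∀ a ∈ Ω, φ t a ∈ Ω
  zero : ∀ a ∈ Ω, φ 0 a = a
  add : ∀ t ≥ (0 : ℝ), ∀ s ≥ (0 : ℝ), ∀ a ∈ Ω, φ (t + s) a = φ t (φ s a)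
  continuousOn : ContinuousOn (fun p : ℝ × E => φ p.1 p.2) (Ici 0 ×ˢ Ω)
  hasDerivWithinAt : ∀ a ∈ Ω, ∀ t ≥ (0 : ℝ),
    HasDerivWithinAt (fun s => φ s a) (f (φ t a)) (Ici 0) t

namespace IsSemiflowOf

variable {f : E → E} {φ : ℝ → E → E} {Ω U : Set E} {ν : Seminorm ℝ E} {a b w : E}

theorem continuousOn_trajectory (hφ : IsSemiflowOf f φ Ω) (ha : a ∈ Ω) :
    ContinuousOn (fun t => φ t a) (Ici 0) :=
  hφ.continuousOn.comp (by fun_prop : Continuous fun t : ℝ => (t, a)).continuousOn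
    fun _ ht => ⟨ht, ha⟩

theorem tendsto_apply (hφ : IsSemiflowOf f φ Ω) {ι : Type*} {l : Filter ι} {x : ι → E}
    (hx : ∀ᶠ i in l, x i ∈ Ω) (hw : w ∈ Ω) (hxw : Tendsto x l (𝓝 w)) {t : ℝ} (ht : 0 ≤ t) :
    Tendsto (fun i => φ t (x i)) l (𝓝 (φ t w)) :=
  (hφ.continuousOn (t, w) ⟨ht, hw⟩).tendsto.comp <| tendsto_nhdsWithin_iff.mpr
    ⟨tendsto_const_nhds.prodMk_nhds hxw, hx.mono fun _ hi => ⟨ht, hi⟩⟩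

theorem eventually_mem_interior (hφ : IsSemiflowOf f φ Ω) (hΩ : IsClosed Ω)
    (hrepel : ∀ x ∈ frontier Ω, ∀ t > (0 : ℝ), φ t x ∉ frontier Ω) (ha : a ∈ Ω) :
    ∀ᶠ t in atTop, φ t a ∈ interior Ω := by
  have hfront : ∀ᶠ t in atTop, φ t a ∉ frontier Ω := by
    by_cases h : ∃ t₀ ≥ (0 : ℝ), φ t₀ a ∈ frontier Ω
    · obtain ⟨t₀, ht₀, hfr⟩ := h
      filter_upwards [eventually_gt_atTop t₀] with t ht
      rw [← sub_add_cancel t t₀, hφ.add _ (sub_nonneg.mpr ht.le) _ ht₀ a ha]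
      exact hrepel _ hfr _ (sub_pos.mpr ht)
    · push Not at h
      filter_upwards [eventually_ge_atTop 0] with t ht using h t ht
  filter_upwards [hfront, eventually_ge_atTop 0] with t hfr ht
  by_contra hint
  exact hfr (hΩ.frontier_eq ▸ ⟨hφ.mapsTo t ht a ha, hint⟩)

theorem eventually_slope_dist_le (hφ : IsSemiflowOf f φ Ω) (hν : Continuous ν)
    (hU : StrictlyContractingOn ν f U) (ha : a ∈ Ω) (hb : b ∈ Ω) {t : ℝ} (ht : 0 ≤ t)
    (hat : φ t a ∈ U) (hbt : φ t b ∈ U) :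
    ∃ κ < 0, ∀ ε > 0, ∀ᶠ z in 𝓝[>] t,
      slope (fun u => ν (φ u a - φ u b)) t z ≤ κ * ν (φ t a - φ t b) + ε := by
  obtain ⟨κ, hκ, hev⟩ := hU _ hat _ hbt
  refine ⟨κ, hκ, fun ε hε => ?_⟩
  have hshift : Tendsto (fun z => z - t) (𝓝[>] t) (𝓝[>] 0) := by
    have := Filter.map_subRight_nhdsGT (c := t) (a := t)
    rw [sub_self] at this
    exact this.le
  have hderiv := ((hφ.hasDerivWithinAt a ha t ht).sub (hφ.hasDerivWithinAt b hb t ht)).mono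
    (Ici_subset_Ici.mpr ht)
  filter_upwards [ν.eventually_le_of_hasDerivWithinAt hν hderiv hε, hshift.eventually hev,
    self_mem_nhdsWithin] with z hz hcontr htz
  refine slope_le_of_le_add_mul htz ?_
  calc ν (φ z a - φ z b)
      ≤ ν (φ t a - φ t b + (z - t) • (f (φ t a) - f (φ t b))) + (z - t) * ε := hz
    _ ≤ (1 + (z - t) * κ) * ν (φ t a - φ t b) + (z - t) * ε := by grw [hcontr]
    _ = ν (φ t a - φ t b) + (z - t) * (κ * ν (φ t a - φ t b) + ε) := by ring

theorem antitoneOn_dist (hφ : IsSemiflowOf f φ Ω) (hν : Continuous ν)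
    (hU : StrictlyContractingOn ν f U) (ha : a ∈ Ω) (hb : b ∈ Ω) {T : ℝ} (hT : 0 ≤ T)
    (habU : ∀ t ≥ T, φ t a ∈ U ∧ φ t b ∈ U) :
    AntitoneOn (fun t => ν (φ t a - φ t b)) (Ici T) := by
  intro t₁ (ht₁ : T ≤ t₁) t₂ _ h12
  refine image_le_of_liminf_slope_right_le_deriv_boundary
    (B := fun _ => ν (φ t₁ a - φ t₁ b)) (B' := fun _ => 0)
    (hν.comp_continuousOn (((hφ.continuousOn_trajectory ha).sub
      (hφ.continuousOn_trajectory hb)).mono fun u hu => (hT.trans ht₁).trans hu.1))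
    le_rfl continuousOn_const (fun _ _ => hasDerivWithinAt_const _ _ _) (fun x hx r hr => ?_)
    (right_mem_Icc.mpr h12)
  have hxT : T ≤ x := ht₁.trans hx.1
  obtain ⟨κ, hκ, hslope⟩ := hφ.eventually_slope_dist_le hν hU ha hb (hT.trans hxT)
    (habU x hxT).1 (habU x hxT).2
  refine ((hslope (r / 2) (half_pos hr)).mono fun z hz => hz.trans_lt ?_).frequently
  nlinarith [apply_nonneg ν (φ x a - φ x b)]

theorem exists_dist_lt (hφ : IsSemiflowOf f φ Ω) (hν : Continuous ν)
    (hU : StrictlyContractingOn ν f U) (ha : a ∈ Ω) (hb : b ∈ Ω) (haU : a ∈ U) (hbU : b ∈ U)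
    (hab : 0 < ν (a - b)) : ∃ t > 0, ν (φ t a - φ t b) < ν (a - b) := by
  obtain ⟨κ, hκ, hslope⟩ := hφ.eventually_slope_dist_le hν hU ha hb le_rfl
    (by rwa [hφ.zero a ha]) (by rwa [hφ.zero b hb])
  have hε : 0 < -κ * ν (a - b) / 2 := by have := mul_pos (neg_pos.mpr hκ) hab; positivity
  obtain ⟨t, hts, (ht : 0 < t)⟩ := ((hslope _ hε).and self_mem_nhdsWithin).exists
  refine ⟨t, ht, ?_⟩
  rw [slope_def_field, sub_zero, div_le_iff₀ ht, hφ.zero a ha, hφ.zero b hb] at hts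
  nlinarith [mul_pos (mul_pos (neg_pos.mpr hκ) hab) ht]

theorem apply_eq_zero_of_forall_eq (hφ : IsSemiflowOf f φ Ω) (hw : w ∈ Ω)
    (hfix : ∀ t ≥ (0 : ℝ), φ t w = w) : f w = 0 := by
  have h := hφ.hasDerivWithinAt w hw 0 le_rfl
  rw [hφ.zero w hw] at h
  exact (uniqueDiffOn_Ici 0 0 self_mem_Ici).eq_deriv _ h
    ((hasDerivWithinAt_const 0 _ w).congr (fun t ht => hfix t ht) (hfix 0 le_rfl))

theorem apply_eq_of_apply_eq_zero (hφ : IsSemiflowOf f φ Ω) {K : NNReal}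
    (hf : LipschitzOnWith K f Ω) {e : E} (he : e ∈ Ω) (hfe : f e = 0) {t : ℝ} (ht : 0 ≤ t) :
    φ t e = e :=
  ODE_solution_unique_of_mem_Icc_right (v := fun _ => f) (s := fun _ => Ω) (fun _ _ => hf)
    ((hφ.continuousOn_trajectory he).mono Icc_subset_Ici_self)
    (fun u hu => (hφ.hasDerivWithinAt e he u hu.1).mono (Ici_subset_Ici.mpr hu.1))
    (fun u hu => hφ.mapsTo u hu.1 e he) continuousOn_const
    (fun u _ => by simpa [hfe] using hasDerivWithinAt_const u (Ici u) e)
    (fun _ _ => he) (hφ.zero e he) (right_mem_Icc.mpr ht)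

theorem monotoneOn_dist_of_tendsto (hφ : IsSemiflowOf f φ Ω) (hν : Continuous ν)
    (hU : StrictlyContractingOn ν f U) (ha : a ∈ Ω) {T : ℝ} (hT : 0 ≤ T)
    (haU : ∀ t ≥ T, φ t a ∈ U) (hw : w ∈ Ω) {l : Filter ℝ} [NeBot l] (hl : l ≤ atTop)
    (haw : Tendsto (fun t => φ t a) l (𝓝 w)) {s : ℝ} (hs : 0 ≤ s) :
    MonotoneOn (fun σ => ν (φ (σ + s) w - φ σ w)) (Ici 0) := by
  have hanti : AntitoneOn (fun t => ν (φ t (φ s a) - φ t a)) (Ici T) :=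
    hφ.antitoneOn_dist hν hU (hφ.mapsTo s hs a ha) ha hT fun t ht =>
      ⟨hφ.add t (hT.trans ht) s hs a ha ▸ haU _ (by linarith), haU t ht⟩
  have hΩ : ∀ᶠ t in l, 0 ≤ t ∧ φ t a ∈ Ω := by
    filter_upwards [hl (eventually_ge_atTop 0)] with t ht using ⟨ht, hφ.mapsTo t ht a ha⟩
  refine monotoneOn_of_tendsto_comp_add hanti hl fun σ hσ => ?_
  have hlim := (hν.tendsto _).comp ((hφ.tendsto_apply (hΩ.mono fun _ h => h.2) hw haw
    (add_nonneg hσ hs)).sub (hφ.tendsto_apply (hΩ.mono fun _ h => h.2) hw haw hσ))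
  refine hlim.congr' ?_
  filter_upwards [hΩ] with t ht
  simp only [Function.comp_apply]
  rw [← hφ.add _ (add_nonneg hσ hs) t ht.1 a ha, ← hφ.add σ hσ t ht.1 a ha,
    ← hφ.add (t + σ) (add_nonneg ht.1 hσ) s hs a ha]
  ring_nf

theorem forall_apply_eq_of_tendsto (hφ : IsSemiflowOf f φ Ω) (hν : Continuous ν)
    (hνdef : ∀ x, ν x = 0 → x = 0) (hU : StrictlyContractingOn ν f U)
    (hUev : ∀ x ∈ Ω, ∀ᶠ t in atTop, φ t x ∈ U) (ha : a ∈ Ω) (hw : w ∈ Ω) {l : Filter ℝ}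
    [NeBot l] (hl : l ≤ atTop) (haw : Tendsto (fun t => φ t a) l (𝓝 w)) {s : ℝ} (hs : 0 ≤ s) :
    φ s w = w := by
  by_contra hne
  obtain ⟨T, hT⟩ := eventually_atTop.mp ((eventually_ge_atTop 0).and (hUev a ha))
  have hmono := hφ.monotoneOn_dist_of_tendsto hν hU ha (hT T le_rfl).1 (fun t ht => (hT t ht).2)
    hw hl haw hs
  have hD₀ : 0 < ν (φ (0 + s) w - φ 0 w) := by
    rw [zero_add, hφ.zero w hw]
    exact (apply_nonneg ν _).lt_of_ne fun h => hne (sub_eq_zero.mp (hνdef _ h.symm))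
  obtain ⟨σ, hσ, hσU, hσsU⟩ : ∃ σ ≥ (0 : ℝ), φ σ w ∈ U ∧ φ (σ + s) w ∈ U :=
    ((eventually_ge_atTop 0).and ((hUev w hw).and
      ((tendsto_atTop_add_const_right _ s tendsto_id).eventually (hUev w hw)))).exists
  obtain ⟨z, hz, hlt⟩ := hφ.exists_dist_lt hν hU (hφ.mapsTo _ (add_nonneg hσ hs) w hw)
    (hφ.mapsTo σ hσ w hw) hσsU hσU (hD₀.trans_le (hmono self_mem_Ici hσ hσ))
  rw [← hφ.add z hz.le _ (add_nonneg hσ hs) w hw, ← hφ.add z hz.le σ hσ w hw,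
    ← add_assoc] at hlt
  exact hlt.not_ge (hmono hσ (add_nonneg hz.le hσ) (by linarith))

theorem exists_tendsto_equilibrium [FiniteDimensional ℝ E] (hφ : IsSemiflowOf f φ Ω)
    (hΩ : IsCompact Ω) (hνdef : ∀ x, ν x = 0 → x = 0) (hU : StrictlyContractingOn ν f U)
    (hUev : ∀ x ∈ Ω, ∀ᶠ t in atTop, φ t x ∈ U) (ha : a ∈ Ω) :
    ∃ w ∈ U, f w = 0 ∧ Tendsto (fun t => φ t a) atTop (𝓝 w) := by
  have hν := ν.continuous_of_finiteDimensional
  obtain ⟨w, hw, hcluster⟩ := hΩ.exists_mapClusterPt (f := atTop) (u := fun t => φ t a)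
    (tendsto_principal.mpr ((eventually_ge_atTop 0).mono fun t ht => hφ.mapsTo t ht a ha))
  obtain ⟨l, hl, haw⟩ := mapClusterPt_iff_ultrafilter.mp hcluster
  have hfix : ∀ s ≥ (0 : ℝ), φ s w = w := fun s hs =>
    hφ.forall_apply_eq_of_tendsto hν hνdef hU hUev ha hw hl haw hs
  obtain ⟨t₀, ht₀, hwt₀⟩ := ((eventually_ge_atTop 0).and (hUev w hw)).exists
  have hwU : w ∈ U := hfix t₀ ht₀ ▸ hwt₀
  refine ⟨w, hwU, hφ.apply_eq_zero_of_forall_eq hw hfix, ?_⟩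
  obtain ⟨T, hT⟩ := eventually_atTop.mp ((eventually_ge_atTop 0).and (hUev a ha))
  have hanti : AntitoneOn (fun t => ν (φ t a - w)) (Ici T) :=
    (hφ.antitoneOn_dist hν hU ha hw (hT T le_rfl).1 fun t ht =>
      ⟨(hT t ht).2, (hfix t (hT t ht).1).symm ▸ hwU⟩).congr fun t ht => by
        simp only [hfix t (hT t ht).1]
  refine Seminorm.tendsto_of_tendsto_apply_sub hνdef (hanti.tendsto_atTop_of_tendsto hl ?_)
  simpa [Function.comp_def] using (hν.tendsto _).comp (haw.sub_const w)

end IsSemiflowOf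

end Flow

/-- If the time-invariant system `ẋ = f(x)` is interior contractive (IC)
w.r.t. some norm, then it admits a unique equilibrium point `e ∈ Ω`, this `e` lies in
the interior of `Ω`, and `φ(t,a) → e` as `t → ∞` for every `a ∈ Ω`. -/
theorem interior_contractive_unique_equilibrium {n : ℕ}
    (Ω : Set (Fin n → ℝ)) (hne : Ω.Nonempty) (hcomp : IsCompact Ω) (hconv : Convex ℝ Ω)
    (ν : Seminorm ℝ (Fin n → ℝ)) (hνdef : ∀ y, ν y = 0 → y = 0)
    (f : (Fin n → ℝ) → (Fin n → ℝ)) (hf : ContDiff ℝ 1 f)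
    (φ : ℝ → (Fin n → ℝ) → (Fin n → ℝ))
    (hφmem : ∀ t ≥ (0:ℝ), ∀ a ∈ Ω, φ t a ∈ Ω)
    (hφ0 : ∀ a ∈ Ω, φ 0 a = a)
    (hφgrp : ∀ t ≥ (0:ℝ), ∀ s ≥ (0:ℝ), ∀ a ∈ Ω, φ (t + s) a = φ t (φ s a))
    (hφcont : ContinuousOn (fun p : ℝ × (Fin n → ℝ) => φ p.1 p.2) (Set.Ici 0 ×ˢ Ω))
    (hφode : ∀ a ∈ Ω, ∀ t ≥ (0:ℝ),
      HasDerivWithinAt (fun s => φ s a) (f (φ t a)) (Set.Ici 0) t)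
    -- μ is the matrix measure induced by ν
    (μ : Matrix (Fin n) (Fin n) ℝ → ℝ)
    (hμ : ∀ A : Matrix (Fin n) (Fin n) ℝ,
      Tendsto (fun ε : ℝ => (opNorm ν ((1 : Matrix (Fin n) (Fin n) ℝ) + ε • A) - 1) / ε)
        (𝓝[>] (0:ℝ)) (𝓝 (μ A)))
    -- IC: (a) the boundary is repelling, (b) μ(J(x)) < 0 in the interior
    (hIC1 : ∀ x₀ ∈ frontier Ω, ∀ t > (0:ℝ), φ t x₀ ∉ frontier Ω)
    (hIC2 : ∀ x ∈ interior Ω, μ (jac f x) < 0) :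
    ∃ e ∈ interior Ω, f e = 0 ∧ (∀ e' ∈ Ω, f e' = 0 → e' = e) ∧
      ∀ a ∈ Ω, Tendsto (fun t => φ t a) atTop (𝓝 e) := by
  have hφ : IsSemiflowOf f φ Ω := ⟨hφmem, hφ0, hφgrp, hφcont, hφode⟩
  have hU : StrictlyContractingOn ν f (interior Ω) :=
    strictlyContractingOn_of_matrixMeasure_neg hνdef hf hμ hconv.interior hIC2
  have hUev : ∀ a ∈ Ω, ∀ᶠ t in atTop, φ t a ∈ interior Ω := fun a ha =>
    hφ.eventually_mem_interior hcomp.isClosed hIC1 ha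
  obtain ⟨a₀, ha₀⟩ := hne
  obtain ⟨e, he, hfe, -⟩ := hφ.exists_tendsto_equilibrium hcomp hνdef hU hUev ha₀
  have huniq : ∀ e' ∈ interior Ω, f e' = 0 → e' = e := fun e' he' hfe' =>
    hU.eq_of_apply_eq_zero hνdef he' he hfe' hfe
  refine ⟨e, he, hfe, fun e' he' hfe' => huniq e' ?_ hfe', fun a ha => ?_⟩
  · obtain ⟨K, hK⟩ := hf.locallyLipschitz.locallyLipschitzOn.exists_lipschitzOnWith_of_compact hcomp
    obtain ⟨t, ht, hint⟩ := ((eventually_ge_atTop 0).and (hUev e' he')).exists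
    rwa [hφ.apply_eq_of_apply_eq_zero hK he' hfe' ht] at hint
  · obtain ⟨w, hw, hfw, hlim⟩ := hφ.exists_tendsto_equilibrium hcomp hνdef hU hUev ha
    rwa [huniq w hw hfw] at hlim
end

section
/- The following three conditions are equivalent: (1) the system is SOST on Ω with respect to |·|: for every ε > 0 and every τ > 0 there exists ℓ = ℓ(τ, ε) > 0 such that |x(t₂+τ, t₁, a) − x(t₂+τ, t₁, b)| ≤ (1+ε)·exp(−ℓ(t₂−t₁))·|a−b| for all t₂ ≥ t₁ ≥ 0 and all a, b ∈ Ω; (2) for every τ > 0 there exists ℓ = ℓ(τ) > 0 such that |x(t₂+τ, t₁, a) − x(t₂+τ, t₁, b)| ≤ (1+τ)·exp(−ℓ(t₂−t₁))·|a−b| for all t₂ ≥ t₁ ≥ 0 and all a, b ∈ Ω; (3) for every ε > 0 and every τ > 0 there exists ℓ₁ = ℓ₁(τ, ε) > 0 such that |x(t, t₁, a) − x(t, t₁, b)| ≤ (1+ε)·exp(−ℓ₁(t−t₁))·|a−b| for all t ≥ t₁ + τ, all t₁ ≥ 0, and all a, b ∈ Ω. -/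
open Filter Topology

/-- Three equivalent characterizations of SOST. -/
theorem sost_equivalent_characterizations {n : ℕ}
    (Ω : Set (Fin n → ℝ))
    (ν : Seminorm ℝ (Fin n → ℝ)) (hνdef : ∀ y, ν y = 0 → y = 0)
    (x : ℝ → ℝ → (Fin n → ℝ) → (Fin n → ℝ))
    (hinit : ∀ t₁ a, 0 ≤ t₁ → a ∈ Ω → x t₁ t₁ a = a) :
    -- (1) SOST
    ((∀ ε > (0:ℝ), ∀ τ > (0:ℝ), ∃ ℓ > (0:ℝ), ∀ t₁ t₂ : ℝ, 0 ≤ t₁ → t₁ ≤ t₂ →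
        ∀ a ∈ Ω, ∀ b ∈ Ω,
          ν (x (t₂ + τ) t₁ a - x (t₂ + τ) t₁ b) ≤
            (1 + ε) * Real.exp (-ℓ * (t₂ - t₁)) * ν (a - b)) ↔
     -- (2) overshoot (1+τ) tied to the transient τ
     (∀ τ > (0:ℝ), ∃ ℓ > (0:ℝ), ∀ t₁ t₂ : ℝ, 0 ≤ t₁ → t₁ ≤ t₂ →
        ∀ a ∈ Ω, ∀ b ∈ Ω,
          ν (x (t₂ + τ) t₁ a - x (t₂ + τ) t₁ b) ≤
            (1 + τ) * Real.exp (-ℓ * (t₂ - t₁)) * ν (a - b))) ∧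
    ((∀ ε > (0:ℝ), ∀ τ > (0:ℝ), ∃ ℓ > (0:ℝ), ∀ t₁ t₂ : ℝ, 0 ≤ t₁ → t₁ ≤ t₂ →
        ∀ a ∈ Ω, ∀ b ∈ Ω,
          ν (x (t₂ + τ) t₁ a - x (t₂ + τ) t₁ b) ≤
            (1 + ε) * Real.exp (-ℓ * (t₂ - t₁)) * ν (a - b)) ↔
     -- (3) decay from time t₁ + τ onwards
     (∀ ε > (0:ℝ), ∀ τ > (0:ℝ), ∃ ℓ₁ > (0:ℝ), ∀ t₁ ≥ (0:ℝ), ∀ t ≥ t₁ + τ,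
        ∀ a ∈ Ω, ∀ b ∈ Ω,
          ν (x t t₁ a - x t t₁ b) ≤
            (1 + ε) * Real.exp (-ℓ₁ * (t - t₁)) * ν (a - b))) := by
  constructor
  · -- (1) ↔ (2)
    constructor
    · intro h1 τ hτ
      exact h1 τ hτ τ hτ
    · intro h2 ε hε τ hτ
      set τ' := min ε τ with hτ'
      have hτ'pos : 0 < τ' := lt_min hε hτ
      have hτ'ε : τ' ≤ ε := min_le_left _ _
      have hτ'τ : τ' ≤ τ := min_le_right _ _
      obtain ⟨ℓ, hℓ, h⟩ := h2 τ' hτ'pos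
      refine ⟨ℓ, hℓ, fun t₁ t₂ ht₁ h12 a ha b hb => ?_⟩
      have hx := h t₁ (t₂ + (τ - τ')) ht₁ (by linarith) a ha b hb
      have heq : t₂ + (τ - τ') + τ' = t₂ + τ := by ring
      rw [heq] at hx
      refine hx.trans ?_
      have hexp : Real.exp (-ℓ * (t₂ + (τ - τ') - t₁)) ≤ Real.exp (-ℓ * (t₂ - t₁)) := by
        apply Real.exp_le_exp.2
        nlinarith
      have hν : (0:ℝ) ≤ ν (a - b) := apply_nonneg ν _
      have h1τ : (1 + τ') ≤ (1 + ε) := by linarith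
      gcongr
  · -- (1) ↔ (3)
    constructor
    · intro h1 ε hε τ hτ
      obtain ⟨ℓ, hℓ, h⟩ := h1 (ε/2) (by linarith) τ hτ
      have hr : 1 < (1+ε)/(1+ε/2) := by
        rw [lt_div_iff₀ (by linarith)]; linarith
      have hlog : 0 < Real.log ((1+ε)/(1+ε/2)) := Real.log_pos hr
      set ℓ₁ := min (ℓ/2) (Real.log ((1+ε)/(1+ε/2)) / (2*τ)) with hℓ₁def
      have hℓ₁pos : 0 < ℓ₁ := lt_min (by linarith) (by positivity)
      refine ⟨ℓ₁, hℓ₁pos, fun t₁ ht₁ t ht a ha b hb => ?_⟩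
      have hx := h t₁ (t - τ) ht₁ (by linarith) a ha b hb
      have heq : t - τ + τ = t := by ring
      rw [heq] at hx
      refine hx.trans ?_
      have hν : (0:ℝ) ≤ ν (a - b) := apply_nonneg ν _
      have key : (1 + ε/2) * Real.exp (-ℓ * (t - τ - t₁)) ≤
          (1 + ε) * Real.exp (-ℓ₁ * (t - t₁)) := by
        set s := t - t₁ with hs
        have hsτ : τ ≤ s := by simp only [hs]; linarith
        rcases le_or_gt (2*τ) s with hcase | hcase
        · -- s ≥ 2τ : rate comparison
          have hexp : Real.exp (-ℓ * (s - τ)) ≤ Real.exp (-ℓ₁ * s) := by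
            apply Real.exp_le_exp.2
            have h1 : ℓ₁ ≤ ℓ/2 := min_le_left _ _
            nlinarith
          have : t - τ - t₁ = s - τ := by simp only [hs]; ring
          rw [this]
          nlinarith [Real.exp_pos (-ℓ * (s - τ)), Real.exp_pos (-ℓ₁ * s)]
        · -- τ ≤ s < 2τ : use the overshoot slack
          have hL : (1 + ε/2) * Real.exp (-ℓ * (t - τ - t₁)) ≤ (1 + ε/2) := by
            have : Real.exp (-ℓ * (t - τ - t₁)) ≤ 1 := by
              rw [Real.exp_le_one_iff]
              nlinarith
            nlinarith
          refine hL.trans ?_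
          have h2 : ℓ₁ ≤ Real.log ((1+ε)/(1+ε/2)) / (2*τ) := min_le_right _ _
          have hℓ₁s : ℓ₁ * s ≤ Real.log ((1+ε)/(1+ε/2)) := by
            have h5 : ℓ₁ * s ≤ ℓ₁ * (2*τ) := by nlinarith
            refine h5.trans ?_
            rw [← le_div_iff₀ (by linarith : (0:ℝ) < 2*τ)]
            exact h2
          have hexp : Real.exp (-Real.log ((1+ε)/(1+ε/2))) ≤ Real.exp (-ℓ₁ * s) := by
            apply Real.exp_le_exp.2; nlinarith
          have hval : Real.exp (-Real.log ((1+ε)/(1+ε/2))) = (1+ε/2)/(1+ε) := by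
            rw [Real.exp_neg, Real.exp_log (by positivity)]
            rw [inv_div]
          rw [hval] at hexp
          have heq2 : (1+ε) * ((1+ε/2)/(1+ε)) = 1+ε/2 := by field_simp
          have h6 := mul_le_mul_of_nonneg_left hexp (by linarith : (0:ℝ) ≤ 1+ε)
          rw [heq2] at h6
          exact h6
      nlinarith [Real.exp_pos (-ℓ * (t - τ - t₁)), Real.exp_pos (-ℓ₁ * (t - t₁))]
    · intro h3 ε hε τ hτ
      obtain ⟨ℓ₁, hℓ₁, h⟩ := h3 ε hε τ hτ
      refine ⟨ℓ₁, hℓ₁, fun t₁ t₂ ht₁ h12 a ha b hb => ?_⟩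
      have hx := h t₁ ht₁ (t₂ + τ) (by linarith) a ha b hb
      refine hx.trans ?_
      have hν : (0:ℝ) ≤ ν (a - b) := apply_nonneg ν _
      have hexp : Real.exp (-ℓ₁ * (t₂ + τ - t₁)) ≤ Real.exp (-ℓ₁ * (t₂ - t₁)) := by
        apply Real.exp_le_exp.2; nlinarith
      gcongr
end

section
/- If the system is ST on Ω with respect to |·|, then it is weakly contractive (WC): |x(s₂, s₁, a) − x(s₂, s₁, b)| < |a−b| for all s₂ > s₁ ≥ 0 and all a, b ∈ Ω with a ≠ b. Indeed, |x(s₂, s₁, a) − x(s₂, s₁, b)| ≤ exp(−ℓ·(s₂−s₁)/2)·|a−b| where ℓ = ℓ((s₂−s₁)/2). -/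
open Filter Topology

/-- ST implies weak contractivity (WC): with `ℓfn` the decay-rate
function of ST, for `s₂ > s₁ ≥ 0` one has
`|x(s₂,s₁,a) − x(s₂,s₁,b)| ≤ exp(−ℓfn((s₂−s₁)/2)·(s₂−s₁)/2)·|a−b|`, and in particular
`|x(s₂,s₁,a) − x(s₂,s₁,b)| < |a−b|` whenever `a ≠ b`. -/
theorem st_implies_weakly_contractive {n : ℕ}
    (Ω : Set (Fin n → ℝ))
    (ν : Seminorm ℝ (Fin n → ℝ)) (hνdef : ∀ y, ν y = 0 → y = 0)
    (x : ℝ → ℝ → (Fin n → ℝ) → (Fin n → ℝ))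
    (hinit : ∀ t₁ a, 0 ≤ t₁ → a ∈ Ω → x t₁ t₁ a = a)
    (ℓfn : ℝ → ℝ)
    (hST : ∀ τ > (0:ℝ), 0 < ℓfn τ ∧ ∀ t₁ t₂ : ℝ, 0 ≤ t₁ → t₁ ≤ t₂ →
      ∀ a ∈ Ω, ∀ b ∈ Ω,
        ν (x (t₂ + τ) t₁ a - x (t₂ + τ) t₁ b) ≤
          Real.exp (-ℓfn τ * (t₂ - t₁)) * ν (a - b)) :
    ∀ s₁ s₂ : ℝ, 0 ≤ s₁ → s₁ < s₂ → ∀ a ∈ Ω, ∀ b ∈ Ω,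
      ν (x s₂ s₁ a - x s₂ s₁ b) ≤
        Real.exp (-ℓfn ((s₂ - s₁) / 2) * ((s₂ - s₁) / 2)) * ν (a - b) ∧
      (a ≠ b → ν (x s₂ s₁ a - x s₂ s₁ b) < ν (a - b)) := by
  intro s₁ s₂ hs₁ hlt a ha b hb
  set τ := (s₂ - s₁) / 2 with hτdef
  have hτ : 0 < τ := by dsimp [τ]; linarith
  obtain ⟨hℓ, hbound⟩ := hST τ hτ
  have key := hbound s₁ (s₁ + τ) hs₁ (by linarith) a ha b hb
  have heq : s₁ + τ + τ = s₂ := by dsimp [τ]; ring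
  rw [heq] at key
  have hsimp : s₁ + τ - s₁ = τ := by ring
  rw [hsimp] at key
  refine ⟨key, fun hne => ?_⟩
  have hν : 0 < ν (a - b) := by
    rcases (apply_nonneg ν (a - b)).lt_or_eq with h | h
    · exact h
    · exact absurd (sub_eq_zero.mp (hνdef _ h.symm)) hne
  have hexp : Real.exp (-ℓfn τ * τ) < 1 := by
    rw [Real.exp_lt_one_iff]
    nlinarith
  calc ν (x s₂ s₁ a - x s₂ s₁ b) ≤ Real.exp (-ℓfn τ * τ) * ν (a - b) := key
    _ < 1 * ν (a - b) := by exact mul_lt_mul_of_pos_right hexp hν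
    _ = ν (a - b) := one_mul _
end

section
/- If the system is SOST on Ω with respect to |·|, then it is non-expansive (NE): |x(s₂, s₁, a) − x(s₂, s₁, b)| ≤ |a−b| for all s₂ > s₁ ≥ 0 and all a, b ∈ Ω. -/
open Filter Topology

/-- SOST implies non-expansiveness (NE):
`|x(s₂,s₁,a) − x(s₂,s₁,b)| ≤ |a−b|` for all `s₂ > s₁ ≥ 0` and `a, b ∈ Ω`. -/
theorem sost_implies_nonexpansive {n : ℕ}
    (Ω : Set (Fin n → ℝ))
    (ν : Seminorm ℝ (Fin n → ℝ)) (hνdef : ∀ y, ν y = 0 → y = 0)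
    (x : ℝ → ℝ → (Fin n → ℝ) → (Fin n → ℝ))
    (hinit : ∀ t₁ a, 0 ≤ t₁ → a ∈ Ω → x t₁ t₁ a = a)
    (hSOST : ∀ ε > (0:ℝ), ∀ τ > (0:ℝ), ∃ ℓ > (0:ℝ), ∀ t₁ t₂ : ℝ, 0 ≤ t₁ → t₁ ≤ t₂ →
      ∀ a ∈ Ω, ∀ b ∈ Ω,
        ν (x (t₂ + τ) t₁ a - x (t₂ + τ) t₁ b) ≤
          (1 + ε) * Real.exp (-ℓ * (t₂ - t₁)) * ν (a - b)) :
    ∀ s₁ s₂ : ℝ, 0 ≤ s₁ → s₁ < s₂ → ∀ a ∈ Ω, ∀ b ∈ Ω,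
      ν (x s₂ s₁ a - x s₂ s₁ b) ≤ ν (a - b) := by
  intro s₁ s₂ hs₁ hlt a ha b hb
  -- For every ε > 0, the quantity is ≤ (1+ε) * ν (a - b).
  have key : ∀ ε > (0:ℝ), ν (x s₂ s₁ a - x s₂ s₁ b) ≤ (1 + ε) * ν (a - b) := by
    intro ε hε
    obtain ⟨ℓ, hℓ, h⟩ := hSOST ε hε (s₂ - s₁) (by linarith)
    have := h s₁ s₁ hs₁ le_rfl a ha b hb
    simpa using this
  by_contra hcon
  push_neg at hcon
  have hν : 0 ≤ ν (a - b) := apply_nonneg ν _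
  set L := ν (x s₂ s₁ a - x s₂ s₁ b)
  set R := ν (a - b)
  have hR1 : (0:ℝ) < R + 1 := by linarith
  have hε : (L - R) / (R + 1) > 0 := div_pos (by linarith) hR1
  have hkey := key _ hε
  have h1 : L ≤ R + (L - R) / (R + 1) * R := by nlinarith [hkey]
  have hfrac : (L - R) / (R + 1) * R < L - R := by
    rw [div_mul_eq_mul_div, div_lt_iff₀ hR1]
    nlinarith
  linarith
end

section
/- Consider the scalar time-varying system ẋ(t) = −α(t)·x(t) on Ω = [−1, 1], where α : ℝ₊ → ℝ₊ is a class-K function (continuous, strictly increasing, with α(0) = 0). Then: (i) the system is ST with ℓ(τ) = α(τ): for every τ > 0, every t₁ ≥ 0, every t₂ ≥ t₁, and any two solutions u, v : [t₁, ∞) → [−1, 1] of ẋ = −α(t)x, one has |u(t₂+τ) − v(t₂+τ)| ≤ exp(−α(τ)·(t₂−t₁))·|u(t₁) − v(t₁)|; but (ii) the system is not contractive: for every c > 0 there exist t₂ ≥ t₁ ≥ 0 and solutions u, v of ẋ = −α(t)x with values in [−1, 1] such that |u(t₂) − v(t₂)| > exp(−c(t₂−t₁))·|u(t₁) − v(t₁)|.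 -/
/-!
The difference `w` of two solutions of `ẋ = -α(t) x` is again a solution. Wherever the rate is at
least `k`, the energy `e^{2kt} w(t)²` is nonincreasing, so `|w|` decays at least like `e^{-kt}`.
Since `α ≥ 0` is nondecreasing, the rate is `≥ 0` on `[t₁, t₁ + τ]` and `≥ α τ` on
`[t₁ + τ, t₂ + τ]`, which gives the ST estimate.

For non-contractivity, take the solutions `exp (-∫₀ᵗ α)` and `0`. By continuity and `α 0 = 0`
there is `δ > 0` with `α δ < c`, and then `∫₀^δ α ≤ δ α δ < c δ`: on `[0, δ]` the solution decays
more slowly than `e^{-ct}`.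
-/

open Set Real

def IsSolutionOn (a : ℝ → ℝ) (t₀ : ℝ) (w : ℝ → ℝ) : Prop :=
  ∀ t ≥ t₀, HasDerivWithinAt w (-a t * w t) (Ici t₀) t

namespace IsSolutionOn

variable {a w w₁ w₂ : ℝ → ℝ} {t₀ : ℝ}

theorem sub (h₁ : IsSolutionOn a t₀ w₁) (h₂ : IsSolutionOn a t₀ w₂) :
    IsSolutionOn a t₀ (w₁ - w₂) := fun t ht =>
  ((h₁ t ht).sub (h₂ t ht)).congr_deriv (by simp only [Pi.sub_apply]; ring)

theorem hasDerivAt (h : IsSolutionOn a t₀ w) {t : ℝ} (ht : t₀ < t) :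
    HasDerivAt w (-a t * w t) t :=
  (h t ht.le).hasDerivAt (Ici_mem_nhds ht)

theorem antitoneOn_exp_mul_sq (h : IsSolutionOn a t₀ w) {s b k : ℝ} (hs : t₀ ≤ s)
    (hk : ∀ t ∈ Icc s b, k ≤ a t) :
    AntitoneOn (fun t => exp (2 * k * t) * w t ^ 2) (Icc s b) := by
  have hcont : ContinuousOn w (Icc s b) := fun t ht =>
    (h t (hs.trans ht.1)).continuousWithinAt.mono fun x hx => hs.trans hx.1
  refine antitoneOn_of_hasDerivWithinAt_nonpos (convex_Icc s b)
    ((continuous_const.mul continuous_id).rexp.continuousOn.mul (hcont.pow 2))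
    (f' := fun t => 2 * exp (2 * k * t) * w t ^ 2 * (k - a t)) (fun t ht => ?_) fun t ht => ?_
  · rw [interior_Icc] at ht
    have hw := h.hasDerivAt (hs.trans_lt ht.1)
    have hexp := ((hasDerivAt_id t).const_mul (2 * k)).exp
    exact ((hexp.mul (hw.pow 2)).congr_deriv
      (by simp only [id, Pi.pow_apply]; ring)).hasDerivWithinAt
  · rw [interior_Icc] at ht
    have hrate := hk t (Ioo_subset_Icc_self ht)
    have hweight : 0 ≤ 2 * exp (2 * k * t) * w t ^ 2 := by positivity
    nlinarith

theorem abs_le_exp_mul_abs (h : IsSolutionOn a t₀ w) {s b k : ℝ} (hs : t₀ ≤ s) (hsb : s ≤ b)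
    (hk : ∀ t ∈ Icc s b, k ≤ a t) :
    |w b| ≤ exp (-k * (b - s)) * |w s| := by
  have henergy := h.antitoneOn_exp_mul_sq hs hk ⟨le_rfl, hsb⟩ ⟨hsb, le_rfl⟩ hsb
  refine abs_le_of_sq_le_sq ?_ (by positivity)
  have hsplit : exp (2 * k * s) = exp (2 * k * b) * exp (-k * (b - s)) ^ 2 := by
    rw [← exp_nat_mul, ← exp_add]; ring_nf
  rw [mul_pow, sq_abs]
  simp only [hsplit] at henergy
  nlinarith [exp_pos (2 * k * b)]

theorem abs_le_exp_mul_abs_of_monotoneOn (h : IsSolutionOn a t₀ w)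
    (ha : MonotoneOn a (Ici 0)) (ha0 : 0 ≤ a 0) (ht₀ : 0 ≤ t₀) {τ t : ℝ} (hτ : 0 ≤ τ)
    (ht : t₀ ≤ t) :
    |w (t + τ)| ≤ exp (-a τ * (t - t₀)) * |w t₀| := by
  have hnonneg : ∀ s ∈ Icc t₀ (t₀ + τ), 0 ≤ a s := fun s hs =>
    ha0.trans (ha (mem_Ici.2 le_rfl) (mem_Ici.2 (ht₀.trans hs.1)) (ht₀.trans hs.1))
  have hrate : ∀ s ∈ Icc (t₀ + τ) (t + τ), a τ ≤ a s := fun s hs =>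
    ha (mem_Ici.2 hτ) (mem_Ici.2 (by linarith [hs.1])) (by linarith [hs.1])
  have hfirst := h.abs_le_exp_mul_abs le_rfl (by linarith) hnonneg
  have hlast := h.abs_le_exp_mul_abs (by linarith) (by linarith) hrate
  rw [neg_zero, zero_mul, exp_zero, one_mul] at hfirst
  calc |w (t + τ)| ≤ exp (-a τ * (t + τ - (t₀ + τ))) * |w (t₀ + τ)| := hlast
    _ ≤ exp (-a τ * (t - t₀)) * |w t₀| := by
      rw [show t + τ - (t₀ + τ) = t - t₀ by ring]; gcongr

end IsSolutionOn

theorem isSolutionOn_exp_neg_integral {a : ℝ → ℝ} {t₀ : ℝ} (ha : ContinuousOn a (Ici t₀)) :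
    IsSolutionOn a t₀ (fun t => exp (-∫ s in t₀..t, a s)) := by
  intro t ht
  have hext : Continuous fun s => a (max t₀ s) :=
    ha.comp_continuous (continuous_const.max continuous_id) fun s => mem_Ici.2 (le_max_left _ _)
  have hint : ∀ x ≥ t₀, ∫ s in t₀..x, a (max t₀ s) = ∫ s in t₀..x, a s := fun x hx =>
    intervalIntegral.integral_congr fun s hs => by
      rw [uIcc_of_le hx] at hs
      simp only [max_eq_right hs.1]
  have hderiv := ((hext.integral_hasStrictDerivAt t₀ t).hasDerivAt.neg.exp).hasDerivWithinAt
    (s := Ici t₀)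
  refine (hderiv.congr (fun x hx => ?_) ?_).congr_deriv ?_
  · simp only [Pi.neg_apply, hint x hx]
  · simp only [Pi.neg_apply, hint t ht]
  · simp only [Pi.neg_apply, hint t ht, max_eq_right ht]
    ring

theorem exp_neg_integral_le_one {a : ℝ → ℝ} {s b : ℝ} (hsb : s ≤ b)
    (ha : ∀ t ∈ Icc s b, 0 ≤ a t) : exp (-∫ t in s..b, a t) ≤ 1 :=
  exp_le_one_iff.2 (neg_nonpos.2 (intervalIntegral.integral_nonneg hsb ha))

theorem exp_neg_mul_lt_exp_neg_integral {a : ℝ → ℝ} {s b c : ℝ} (hsb : s < b)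
    (ha : MonotoneOn a (Icc s b)) (hc : a b < c) :
    exp (-c * (b - s)) < exp (-∫ t in s..b, a t) := by
  have hle : ∫ t in s..b, a t ≤ ∫ _ in s..b, a b :=
    intervalIntegral.integral_mono_on hsb.le
      (MonotoneOn.intervalIntegrable (by rwa [uIcc_of_le hsb.le]))
      intervalIntegrable_const fun t ht => ha ht (right_mem_Icc.2 hsb.le) ht.2
  rw [intervalIntegral.integral_const, smul_eq_mul] at hle
  exact exp_lt_exp.2 (by nlinarith)

/-- For the scalar system `ẋ = −α(t)x` on `Ω = [−1,1]`, with `α` a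
class-K function, the system is ST with `ℓ(τ) = α(τ)`, but it is not contractive. -/
theorem scalar_classK_st_not_contractive (α : ℝ → ℝ)
    (hα0 : α 0 = 0)
    (hαcont : ContinuousOn α (Set.Ici 0))
    (hαmono : StrictMonoOn α (Set.Ici 0)) :
    -- (i) ST with ℓ(τ) = α(τ)
    ((∀ τ > (0:ℝ), ∀ t₁ ≥ (0:ℝ), ∀ t₂ ≥ t₁, ∀ u v : ℝ → ℝ,
        (∀ t ≥ t₁, u t ∈ Set.Icc (-1:ℝ) 1 ∧
          HasDerivWithinAt u (-α t * u t) (Set.Ici t₁) t) →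
        (∀ t ≥ t₁, v t ∈ Set.Icc (-1:ℝ) 1 ∧
          HasDerivWithinAt v (-α t * v t) (Set.Ici t₁) t) →
        |u (t₂ + τ) - v (t₂ + τ)| ≤ Real.exp (-α τ * (t₂ - t₁)) * |u t₁ - v t₁|) ∧
     -- (ii) not contractive: no exponential rate c > 0 works
     (∀ c > (0:ℝ), ∃ t₁ t₂ : ℝ, 0 ≤ t₁ ∧ t₁ ≤ t₂ ∧ ∃ u v : ℝ → ℝ,
        (∀ t ≥ t₁, u t ∈ Set.Icc (-1:ℝ) 1 ∧
          HasDerivWithinAt u (-α t * u t) (Set.Ici t₁) t) ∧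
        (∀ t ≥ t₁, v t ∈ Set.Icc (-1:ℝ) 1 ∧
          HasDerivWithinAt v (-α t * v t) (Set.Ici t₁) t) ∧
        Real.exp (-c * (t₂ - t₁)) * |u t₁ - v t₁| < |u t₂ - v t₂|)) := by
  have hmono := hαmono.monotoneOn
  have hnonneg : ∀ t ≥ 0, 0 ≤ α t := fun t ht => hα0 ▸ hmono self_mem_Ici ht ht
  refine ⟨fun τ hτ t₁ ht₁ t₂ ht₂ u v hu hv => ?_, fun c hc => ?_⟩
  · have hw : IsSolutionOn α t₁ (u - v) :=
      IsSolutionOn.sub (fun t ht => (hu t ht).2) (fun t ht => (hv t ht).2)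
    exact hw.abs_le_exp_mul_abs_of_monotoneOn hmono hα0.ge ht₁ hτ.le ht₂
  · obtain ⟨δ, hαδ, hδ⟩ : ∃ δ, α δ < c ∧ 0 < δ :=
      ((((hαcont 0 self_mem_Ici).eventually_lt_const (by rwa [hα0])).filter_mono
        (nhdsWithin_mono _ Ioi_subset_Ici_self)).and self_mem_nhdsWithin).exists
    have hsol := isSolutionOn_exp_neg_integral hαcont
    refine ⟨0, δ, le_rfl, hδ.le, _, fun _ => 0, fun t ht => ⟨⟨?_, ?_⟩, hsol t ht⟩,
      fun t _ => ⟨by norm_num, by simpa using hasDerivWithinAt_const t (Ici 0) (0 : ℝ)⟩, ?_⟩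
    · linarith [exp_pos (-∫ s in (0 : ℝ)..t, α s)]
    · exact exp_neg_integral_le_one ht fun s hs => hnonneg s hs.1
    · simpa [abs_of_pos (exp_pos _)] using
        exp_neg_mul_lt_exp_neg_integral hδ (hmono.mono Icc_subset_Ici_self) hαδ
end

section
/- Consider the n-dimensional system (n ≥ 2) ẋ₁ = g(x_n) − α₁x₁, ẋ_i = x_{i−1} − α_i x_i for i = 2, …, n, where α_i > 0, g(u) = (1+u)/(k+u) with k > 1, and let α := α₁·α₂·⋯·α_n. Its Jacobian at x ∈ ℝ₊ⁿ is the matrix J(x) with J(x)_{ii} = −α_i, J(x)_{i+1,i} = 1 for i = 1, …, n−1, J(x)_{1,n} = g'(x_n) = (k−1)/(k+x_n)², and all other entries zero. If k − 1 < α·k², then there exists ε ∈ (0, min_i α_i) such that μ₁(D_ε J(x) D_ε⁻¹) ≤ −ε/2 for all x ∈ ℝ₊ⁿ, where D_ε := diag(1, α₁−ε, (α₁−ε)(α₂−ε), …, Π_{i=1}^{n−1}(α_i−ε)); consequently the system is contractive on ℝ₊ⁿ with respect to the scaled norm |z|_{1,D_ε} := ‖D_ε z‖₁. -/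
/-!
By the secant identity `g a - g b = (k - 1) / ((k + a) * (k + b)) * (a - b)`, the difference of the
vector field at two points of `ℝ₊ⁿ` is `M (a - b)`, where `M` is the Jacobian with its corner entry
`g'(x_n)` replaced by some `γ ∈ [0, (k - 1) / k²]`. Conjugation by `D_ε` turns every subdiagonal
entry into `α_j - ε`, so every column sum `c_j` but the last equals `-ε`, and the last one is
`-α_n + γ / d_n ≤ -ε / 2` as soon as `∏ (α_i - ε) > (k - 1) / k²`, which holds for small `ε`.
Hence a forward Euler step `z ↦ z + h M z` shrinks the weighted `L¹` norm by `1 - h ε / 2`, and a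
Gronwall argument on the right derivative of `t ↦ ‖D_ε (u t - v t)‖₁` gives exponential contraction.
-/

open Filter Topology

/-- The vector field of the biochemical feedback circuit:
`ẋ₁ = g(x_n) − α₁x₁`, `ẋ_i = x_{i−1} − α_i x_i` for `i = 2,…,n`,
where `g(u) = (1+u)/(k+u)`. -/
noncomputable def bioF (n : ℕ) (α : Fin n → ℝ) (k : ℝ) (x : Fin n → ℝ) : Fin n → ℝ :=
  fun i =>
    if (i : ℕ) = 0 then
      (1 + x ⟨n - 1, Nat.sub_lt i.pos Nat.one_pos⟩) /
        (k + x ⟨n - 1, Nat.sub_lt i.pos Nat.one_pos⟩) - α i * x i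
    else
      x ⟨(i : ℕ) - 1, lt_of_le_of_lt (Nat.sub_le _ _) i.isLt⟩ - α i * x i

/-- The Jacobian of `bioF` at `x ∈ ℝ₊ⁿ`: `J_{ii} = −α_i`, `J_{i+1,i} = 1`,
`J_{1,n} = g'(x_n) = (k−1)/(k+x_n)²`, all other entries zero. -/
noncomputable def bioJac (n : ℕ) (α : Fin n → ℝ) (k : ℝ) (x : Fin n → ℝ) :
    Matrix (Fin n) (Fin n) ℝ :=
  fun i j =>
    if i = j then -α i
    else if (i : ℕ) = (j : ℕ) + 1 then 1
    else if (i : ℕ) = 0 ∧ (j : ℕ) = n - 1 then (k - 1) / (k + x j) ^ 2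
    else 0

/-- The diagonal entries of the scaling matrix `D_ε`:
`d_i = Π_{m < i} (α_m − ε)` (so `d₀ = 1`). -/
noncomputable def dEps {n : ℕ} (α : Fin n → ℝ) (ε : ℝ) : Fin n → ℝ :=
  fun i => ∏ m ∈ Finset.univ.filter (fun m : Fin n => (m : ℕ) < (i : ℕ)), (α m - ε)

open Matrix

theorem norm_le_exp_mul_of_euler_step_le {E : Type*} [NormedAddCommGroup E] [NormedSpace ℝ E]
    {w y : ℝ → E} {a c : ℝ}
    (hw : ∀ t ≥ a, HasDerivWithinAt w (y t) (Set.Ici a) t)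
    (hstep : ∀ t ≥ a, ∀ᶠ h in 𝓝[>] 0, ‖w t + h • y t‖ ≤ (1 - c * h) * ‖w t‖)
    {t : ℝ} (ht : a ≤ t) : ‖w t‖ ≤ Real.exp (-c * (t - a)) * ‖w a‖ := by
  have hcont : ContinuousOn (fun s => ‖w s‖) (Set.Icc a t) := fun s hs =>
    ((hw s hs.1).continuousWithinAt.mono Set.Icc_subset_Ici_self).norm
  have hslope : ∀ s ∈ Set.Ico a t, ∀ r, -c * ‖w s‖ < r →
      ∃ᶠ z in 𝓝[>] s, (z - s)⁻¹ * (‖w z‖ - ‖w s‖) < r := by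
    intro s hs r hr
    have hder : Tendsto (fun z => ‖slope w s z - y s‖) (𝓝[>] s) (𝓝 0) := by
      have := hasDerivWithinAt_iff_tendsto_slope' (Set.self_notMem_Ioi) |>.1
        ((hw s hs.1).mono (Set.Ioi_subset_Ici_self.trans (Set.Ici_subset_Ici.2 hs.1)))
      simpa using (this.sub_const (y s)).norm
    have hshift : Tendsto (fun z => z - s) (𝓝[>] s) (𝓝[>] 0) :=
      tendsto_nhdsWithin_of_tendsto_nhds_of_eventually_within _
        (by simpa using ((continuous_sub_right s).tendsto s).mono_left nhdsWithin_le_nhds)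
        (eventually_nhdsWithin_of_forall fun z hz => Set.mem_Ioi.2 (sub_pos.2 hz))
    refine Filter.Eventually.frequently ?_
    filter_upwards [hshift.eventually (hstep s hs.1),
      hder.eventually (gt_mem_nhds (show 0 < r + c * ‖w s‖ by linarith)),
      self_mem_nhdsWithin] with z hstepz herr hz
    have hh : 0 < z - s := sub_pos.2 hz
    have hdecomp : w z = (w s + (z - s) • y s) + (z - s) • (slope w s z - y s) := by
      rw [slope_def_module, smul_sub, smul_inv_smul₀ hh.ne']
      abel
    have hnorm : ‖w z‖ - ‖w s‖ ≤ (z - s) * (-c * ‖w s‖ + ‖slope w s z - y s‖) := by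
      calc ‖w z‖ - ‖w s‖ ≤ ‖w s + (z - s) • y s‖ + (z - s) * ‖slope w s z - y s‖ - ‖w s‖ := by
            rw [hdecomp]
            gcongr
            exact (norm_add_le _ _).trans_eq (by rw [norm_smul, Real.norm_of_nonneg hh.le])
        _ ≤ _ := by nlinarith
    calc (z - s)⁻¹ * (‖w z‖ - ‖w s‖) ≤ -c * ‖w s‖ + ‖slope w s z - y s‖ := by
          rw [inv_mul_le_iff₀ hh]; exact hnorm
      _ < r := by linarith
  have := le_gronwallBound_of_liminf_deriv_right_le hcont hslope le_rfl
    (fun s _ => (add_zero _).ge) t ⟨ht, le_rfl⟩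
  rwa [gronwallBound_ε0, mul_comm] at this

lemma cCol_le_mu1 {n : ℕ} (A : Matrix (Fin n) (Fin n) ℝ) (j : Fin n) : cCol A j ≤ mu1 A :=
  le_ciSup (Finite.bddAbove_range _) j

lemma sum_abs_one_add_smul_apply {n : ℕ} (A : Matrix (Fin n) (Fin n) ℝ) {h : ℝ} (hh : 0 ≤ h)
    {j : Fin n} (hj : 0 ≤ 1 + h * A j j) :
    ∑ i, |(1 + h • A) i j| = 1 + h * cCol A j := by
  rw [← Finset.add_sum_erase _ _ (Finset.mem_univ j), cCol, mul_add, Finset.mul_sum, ← add_assoc]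
  congr 1
  · simpa using abs_of_nonneg hj
  · refine Finset.sum_congr rfl fun i hi => ?_
    rw [Matrix.add_apply, Matrix.one_apply_ne (Finset.ne_of_mem_erase hi), zero_add,
      Matrix.smul_apply, smul_eq_mul, abs_mul, abs_of_nonneg hh]

theorem sum_abs_add_smul_mulVec_le {n : ℕ} (A : Matrix (Fin n) (Fin n) ℝ) (z : Fin n → ℝ)
    {h : ℝ} (hh : 0 ≤ h) (hdiag : ∀ j, 0 ≤ 1 + h * A j j) :
    ∑ i, |(z + h • A *ᵥ z) i| ≤ (1 + h * mu1 A) * ∑ i, |z i| := by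
  have hz : z + h • A *ᵥ z = (1 + h • A) *ᵥ z := by
    rw [Matrix.add_mulVec, Matrix.one_mulVec, Matrix.smul_mulVec]
  calc ∑ i, |(z + h • A *ᵥ z) i| ≤ ∑ i, ∑ j, |(1 + h • A) i j| * |z j| := by
        rw [hz]
        simp only [Matrix.mulVec, dotProduct]
        refine Finset.sum_le_sum fun i _ => (Finset.abs_sum_le_sum_abs _ _).trans_eq ?_
        simp only [abs_mul]
    _ = ∑ j, (1 + h * cCol A j) * |z j| := by
        rw [Finset.sum_comm]
        simp only [← Finset.sum_mul, sum_abs_one_add_smul_apply A hh (hdiag _)]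
    _ ≤ ∑ j, (1 + h * mu1 A) * |z j| := by
        gcongr with j
        exact cCol_le_mu1 A j
    _ = (1 + h * mu1 A) * ∑ i, |z i| := by rw [Finset.mul_sum]

lemma diagonal_mul_mul_inv_diagonal_apply {n : ℕ} {d : Fin n → ℝ} (hd : ∀ i, d i ≠ 0)
    (A : Matrix (Fin n) (Fin n) ℝ) (i j : Fin n) :
    (diagonal d * A * (diagonal d)⁻¹) i j = d i * A i j / d j := by
  have hinv : (diagonal d)⁻¹ = diagonal fun i => (d i)⁻¹ := by
    refine Matrix.inv_eq_right_inv ?_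
    rw [diagonal_mul_diagonal, ← diagonal_one]
    exact congrArg diagonal (funext fun i => mul_inv_cancel₀ (hd i))
  rw [hinv, mul_diagonal, diagonal_mul, div_eq_mul_inv]

lemma cCol_diagonal_mul_mul_inv_diagonal {n : ℕ} {d : Fin n → ℝ} (hd : ∀ i, 0 < d i)
    (A : Matrix (Fin n) (Fin n) ℝ) {i₀ j : Fin n} (hi₀ : i₀ ≠ j)
    (hA : ∀ i, i ≠ j → i ≠ i₀ → A i j = 0) :
    cCol (diagonal d * A * (diagonal d)⁻¹) j = A j j + d i₀ * |A i₀ j| / d j := by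
  have hd' : ∀ i, d i ≠ 0 := fun i => (hd i).ne'
  rw [cCol, Finset.sum_eq_single_of_mem i₀ (Finset.mem_erase.2 ⟨hi₀, Finset.mem_univ _⟩)
      fun i hi hne => by
        rw [diagonal_mul_mul_inv_diagonal_apply hd', hA i (Finset.ne_of_mem_erase hi) hne]
        simp,
    diagonal_mul_mul_inv_diagonal_apply hd', diagonal_mul_mul_inv_diagonal_apply hd',
    mul_div_cancel_left₀ _ (hd' j), abs_div, abs_mul, abs_of_pos (hd i₀), abs_of_pos (hd j)]

theorem eventually_sum_abs_mul_add_smul_mulVec_le {n : ℕ} {d : Fin n → ℝ} (hd : ∀ i, d i ≠ 0)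
    (A : Matrix (Fin n) (Fin n) ℝ) (z : Fin n → ℝ) :
    ∀ᶠ h in 𝓝[>] 0, ∑ i, |d i * (z + h • A *ᵥ z) i| ≤
      (1 + h * mu1 (diagonal d * A * (diagonal d)⁻¹)) * ∑ i, |d i * z i| := by
  have hB : ∀ j, (diagonal d * A * (diagonal d)⁻¹) j j = A j j := fun j => by
    rw [diagonal_mul_mul_inv_diagonal_apply hd, mul_div_cancel_left₀ _ (hd j)]
  have hdiag : ∀ᶠ h in 𝓝 (0 : ℝ), ∀ j, 0 < 1 + h * A j j := eventually_all.2 fun j =>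
    (Continuous.tendsto' (by fun_prop) 0 1 (by simp)).eventually (lt_mem_nhds one_pos)
  filter_upwards [nhdsWithin_le_nhds hdiag, self_mem_nhdsWithin] with h hdiag hh
  have hvec : (fun i => d i * (z + h • A *ᵥ z) i) =
      d * z + h • (diagonal d * A * (diagonal d)⁻¹) *ᵥ (d * z) := by
    ext i
    simp only [Pi.add_apply, Pi.smul_apply, Pi.mul_apply, smul_eq_mul, mulVec, dotProduct,
      diagonal_mul_mul_inv_diagonal_apply hd, mul_add, Finset.mul_sum]
    congr 1
    refine Finset.sum_congr rfl fun j _ => ?_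
    field_simp [hd j]
  have key := sum_abs_add_smul_mulVec_le _ (d * z) (le_of_lt hh) fun j => (hB j ▸ hdiag j).le
  rw [← hvec] at key
  simpa only [Pi.mul_apply] using key

theorem sum_abs_mul_sub_le_exp_of_mu1_le {n : ℕ} {F : (Fin n → ℝ) → Fin n → ℝ}
    {S : Set (Fin n → ℝ)} {d : Fin n → ℝ} (hd : ∀ i, d i ≠ 0) {c : ℝ}
    (hF : ∀ a ∈ S, ∀ b ∈ S, ∃ A : Matrix (Fin n) (Fin n) ℝ,
      F a - F b = A *ᵥ (a - b) ∧ mu1 (diagonal d * A * (diagonal d)⁻¹) ≤ -c)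
    {u v : ℝ → Fin n → ℝ} {t₀ : ℝ}
    (hu : ∀ t ≥ t₀, u t ∈ S ∧ HasDerivWithinAt u (F (u t)) (Set.Ici t₀) t)
    (hv : ∀ t ≥ t₀, v t ∈ S ∧ HasDerivWithinAt v (F (v t)) (Set.Ici t₀) t)
    {t : ℝ} (ht : t₀ ≤ t) :
    ∑ i, |d i * (u t i - v t i)| ≤ Real.exp (-c * (t - t₀)) * ∑ i, |d i * (u t₀ i - v t₀ i)| := by
  let Φ : (Fin n → ℝ) →L[ℝ] PiLp 1 fun _ : Fin n => ℝ :=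
    (PiLp.continuousLinearEquiv 1 ℝ fun _ : Fin n => ℝ).symm.toContinuousLinearMap ∘L
      LinearMap.toContinuousLinearMap (toLin' (diagonal d))
  have hΦ : ∀ z, ‖Φ z‖ = ∑ i, |d i * z i| := fun z => by
    simp [Φ, PiLp.norm_eq_of_L1, mulVec_diagonal]
  have hstep : ∀ s ≥ t₀, ∀ᶠ h in 𝓝[>] 0, ‖Φ (u s - v s) + h • Φ (F (u s) - F (v s))‖ ≤
      (1 - c * h) * ‖Φ (u s - v s)‖ := by
    intro s hs
    obtain ⟨A, hA, hμ⟩ := hF _ (hu s hs).1 _ (hv s hs).1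
    filter_upwards [eventually_sum_abs_mul_add_smul_mulVec_le hd A (u s - v s),
      self_mem_nhdsWithin] with h hle (hh : 0 < h)
    rw [← map_smul, ← map_add, hA, hΦ, hΦ]
    refine hle.trans (mul_le_mul_of_nonneg_right ?_ (by positivity))
    nlinarith
  have := norm_le_exp_mul_of_euler_step_le
    (fun s hs => Φ.hasFDerivAt.comp_hasDerivWithinAt s ((hu s hs).2.sub (hv s hs).2)) hstep ht
  simpa only [Function.comp_apply, Pi.sub_apply, hΦ] using this

lemma dEps_zero {m : ℕ} (α : Fin (m + 1) → ℝ) (ε : ℝ) : dEps α ε 0 = 1 := by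
  simp [dEps]

lemma dEps_succ {m : ℕ} (α : Fin (m + 1) → ℝ) (ε : ℝ) (j : Fin m) :
    dEps α ε j.succ = dEps α ε j.castSucc * (α j.castSucc - ε) := by
  have hfilter : Finset.univ.filter (fun i : Fin (m + 1) => (i : ℕ) < j.succ) =
      insert j.castSucc (Finset.univ.filter fun i : Fin (m + 1) => (i : ℕ) < j.castSucc) := by
    ext i
    simp only [Finset.mem_filter, Finset.mem_univ, true_and, Finset.mem_insert, Fin.ext_iff,
      Fin.val_succ, Fin.val_castSucc]
    omega
  rw [dEps, dEps, hfilter, Finset.prod_insert (by simp), mul_comm]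

lemma dEps_last_mul {m : ℕ} (α : Fin (m + 1) → ℝ) (ε : ℝ) :
    dEps α ε (Fin.last m) * (α (Fin.last m) - ε) = ∏ i, (α i - ε) := by
  have hfilter : Finset.univ.filter (fun i : Fin (m + 1) => (i : ℕ) < Fin.last m) =
      Finset.univ.erase (Fin.last m) := by
    ext i
    simp only [Finset.mem_filter, Finset.mem_univ, true_and, Finset.mem_erase, ne_eq, and_true,
      Fin.ext_iff, Fin.val_last]
    have := i.isLt
    omega
  rw [dEps, hfilter, Finset.prod_erase_mul _ _ (Finset.mem_univ _)]

lemma dEps_pos {n : ℕ} {α : Fin n → ℝ} {ε : ℝ} (hε : ∀ i, ε < α i) (i : Fin n) :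
    0 < dEps α ε i :=
  Finset.prod_pos fun m _ => sub_pos.2 (hε m)

lemma exists_pos_forall_lt_and_lt_prod_sub {ι : Type*} [Fintype ι] {α : ι → ℝ}
    (hα : ∀ i, 0 < α i) {L : ℝ} (hL : L < ∏ i, α i) :
    ∃ ε > 0, (∀ i, ε < α i) ∧ L < ∏ i, (α i - ε) := by
  have hprod : ∀ᶠ e in 𝓝 (0 : ℝ), L < ∏ i, (α i - e) :=
    (Continuous.tendsto' (by fun_prop) 0 _ (by simp)).eventually (lt_mem_nhds hL)
  have hlt : ∀ᶠ e in 𝓝 (0 : ℝ), ∀ i, e < α i := eventually_all.2 fun i => eventually_lt_nhds (hα i)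
  obtain ⟨ε, ⟨hprod, hlt⟩, hε⟩ :=
    ((hprod.and hlt).filter_mono nhdsWithin_le_nhds |>.and
      (self_mem_nhdsWithin (s := Set.Ioi (0 : ℝ)))).exists
  exact ⟨ε, hε, hlt, hprod⟩

def feedbackMatrix {n : ℕ} (α : Fin n → ℝ) (γ : ℝ) : Matrix (Fin n) (Fin n) ℝ :=
  fun i j =>
    if i = j then -α i
    else if (i : ℕ) = (j : ℕ) + 1 then 1
    else if (i : ℕ) = 0 ∧ (j : ℕ) = n - 1 then γ
    else 0

section feedbackMatrix

variable {m : ℕ} (α : Fin (m + 1) → ℝ) (γ : ℝ)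

lemma feedbackMatrix_apply_self (i : Fin (m + 1)) : feedbackMatrix α γ i i = -α i := by
  simp [feedbackMatrix]

lemma feedbackMatrix_succ_castSucc (j : Fin m) : feedbackMatrix α γ j.succ j.castSucc = 1 := by
  simp [feedbackMatrix, Fin.ext_iff]

lemma feedbackMatrix_apply_castSucc_of_ne {i : Fin (m + 1)} {j : Fin m} (hj : i ≠ j.castSucc)
    (hs : i ≠ j.succ) : feedbackMatrix α γ i j.castSucc = 0 := by
  have := j.isLt
  simp only [feedbackMatrix, ne_eq, Fin.ext_iff, Fin.val_castSucc, Fin.val_succ] at *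
  split_ifs <;> first | rfl | omega

lemma feedbackMatrix_apply_last_of_ne {i : Fin (m + 1)} (hl : i ≠ Fin.last m) (h0 : i ≠ 0) :
    feedbackMatrix α γ i (Fin.last m) = 0 := by
  have := i.isLt
  simp only [feedbackMatrix, ne_eq, Fin.ext_iff, Fin.val_last, Fin.val_zero] at *
  split_ifs <;> first | rfl | omega

lemma feedbackMatrix_mulVec_succ (z : Fin (m + 1) → ℝ) (i : Fin m) :
    (feedbackMatrix α γ *ᵥ z) i.succ = z i.castSucc - α i.succ * z i.succ := by
  rw [mulVec, dotProduct, Fintype.sum_eq_add i.succ i.castSucc (Fin.castSucc_lt_succ (i := i)).ne'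
    ?_, feedbackMatrix_apply_self, feedbackMatrix_succ_castSucc]
  · ring
  · rintro j ⟨hs, hc⟩
    have := i.isLt
    simp only [feedbackMatrix, ne_eq, Fin.ext_iff, Fin.val_castSucc, Fin.val_succ] at *
    split_ifs <;> simp_all

end feedbackMatrix

lemma feedbackMatrix_zero_last {m : ℕ} (α : Fin (m + 2) → ℝ) (γ : ℝ) :
    feedbackMatrix α γ 0 (Fin.last (m + 1)) = γ := by
  simp [feedbackMatrix, Fin.ext_iff]

lemma feedbackMatrix_mulVec_zero {m : ℕ} (α : Fin (m + 2) → ℝ) (γ : ℝ) (z : Fin (m + 2) → ℝ) :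
    (feedbackMatrix α γ *ᵥ z) 0 = -α 0 * z 0 + γ * z (Fin.last (m + 1)) := by
  rw [mulVec, dotProduct, Fintype.sum_eq_add 0 (Fin.last (m + 1)) Fin.last_pos.ne ?_]
  · simp [feedbackMatrix, Fin.ext_iff]
  · rintro j ⟨h0, hl⟩
    simp only [feedbackMatrix, ne_eq, Fin.ext_iff, Fin.val_last, Fin.val_zero] at *
    split_ifs <;> simp_all

lemma bioJac_eq_feedbackMatrix {m : ℕ} (α : Fin (m + 1) → ℝ) (k : ℝ) (x : Fin (m + 1) → ℝ) :
    bioJac (m + 1) α k x = feedbackMatrix α ((k - 1) / (k + x (Fin.last m)) ^ 2) := by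
  ext i j
  simp only [bioJac, feedbackMatrix]
  split_ifs with _ _ h
  any_goals rfl
  rw [show j = Fin.last m from Fin.ext (by simpa using h.2)]

lemma one_add_div_sub_one_add_div {k a b : ℝ} (ha : k + a ≠ 0) (hb : k + b ≠ 0) :
    (1 + a) / (k + a) - (1 + b) / (k + b) = (k - 1) / ((k + a) * (k + b)) * (a - b) := by
  field_simp
  ring

lemma bioF_zero {m : ℕ} (α : Fin (m + 2) → ℝ) (k : ℝ) (x : Fin (m + 2) → ℝ) :
    bioF (m + 2) α k x 0 =
      (1 + x (Fin.last (m + 1))) / (k + x (Fin.last (m + 1))) - α 0 * x 0 :=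
  rfl

lemma bioF_succ {m : ℕ} (α : Fin (m + 1) → ℝ) (k : ℝ) (x : Fin (m + 1) → ℝ) (i : Fin m) :
    bioF (m + 1) α k x i.succ = x i.castSucc - α i.succ * x i.succ :=
  rfl

lemma bioF_sub_bioF {m : ℕ} (α : Fin (m + 2) → ℝ) (k : ℝ) {a b : Fin (m + 2) → ℝ}
    (ha : k + a (Fin.last (m + 1)) ≠ 0) (hb : k + b (Fin.last (m + 1)) ≠ 0) :
    bioF (m + 2) α k a - bioF (m + 2) α k b =
      feedbackMatrix α ((k - 1) / ((k + a (Fin.last (m + 1))) * (k + b (Fin.last (m + 1))))) *ᵥ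
        (a - b) := by
  ext i
  refine Fin.cases ?_ (fun i => ?_) i
  · rw [Pi.sub_apply, bioF_zero, bioF_zero, feedbackMatrix_mulVec_zero, Pi.sub_apply,
      Pi.sub_apply, ← one_add_div_sub_one_add_div ha hb]
    ring
  · rw [Pi.sub_apply, bioF_succ, bioF_succ, feedbackMatrix_mulVec_succ]
    simp only [Pi.sub_apply]
    ring

theorem mu1_conj_feedbackMatrix_le {m : ℕ} {α : Fin (m + 2) → ℝ} {ε γ : ℝ} (hε : 0 ≤ ε)
    (hεα : ∀ i, ε < α i) (hγ0 : 0 ≤ γ)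
    (hγ : γ ≤ (α (Fin.last (m + 1)) - ε / 2) * dEps α ε (Fin.last (m + 1))) :
    mu1 (diagonal (dEps α ε) * feedbackMatrix α γ * (diagonal (dEps α ε))⁻¹) ≤ -ε / 2 := by
  have hd := dEps_pos hεα
  refine ciSup_le fun j => Fin.lastCases ?_ (fun j => ?_) j
  · rw [cCol_diagonal_mul_mul_inv_diagonal hd _ Fin.last_pos.ne
        fun i hl h0 => feedbackMatrix_apply_last_of_ne α γ hl h0,
      feedbackMatrix_apply_self, feedbackMatrix_zero_last, dEps_zero, one_mul,
      abs_of_nonneg hγ0]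
    linarith [(div_le_iff₀ (hd _)).2 hγ]
  · rw [cCol_diagonal_mul_mul_inv_diagonal hd _ Fin.castSucc_lt_succ.ne'
        fun i hc hs => feedbackMatrix_apply_castSucc_of_ne α γ hc hs,
      feedbackMatrix_apply_self, feedbackMatrix_succ_castSucc, abs_one, mul_one, dEps_succ,
      mul_div_cancel_left₀ _ (hd _).ne']
    linarith

lemma sub_one_div_mul_mem_Icc {k a b : ℝ} (hk : 1 < k) (ha : 0 ≤ a) (hb : 0 ≤ b) :
    (k - 1) / ((k + a) * (k + b)) ∈ Set.Icc 0 ((k - 1) / k ^ 2) :=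
  ⟨div_nonneg (by linarith) (by nlinarith),
    div_le_div_of_nonneg_left (by linarith) (by positivity) (by nlinarith)⟩

/-- If `k − 1 < α·k²` (with `α = Π α_i`), then there is
`ε ∈ (0, min_i α_i)` with `μ₁(D_ε J(x) D_ε⁻¹) ≤ −ε/2` for all `x ∈ ℝ₊ⁿ`; consequently
the system is contractive on `ℝ₊ⁿ` w.r.t. the scaled norm `|z|_{1,D_ε} = ‖D_ε z‖₁`. -/
theorem bio_circuit_contractive {n : ℕ} (hn : 2 ≤ n)
    (α : Fin n → ℝ) (hα : ∀ i, 0 < α i)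
    (k : ℝ) (hk : 1 < k)
    (hcond : k - 1 < (∏ i, α i) * k ^ 2) :
    ∃ ε : ℝ, 0 < ε ∧ (∀ i, ε < α i) ∧
      (∀ x : Fin n → ℝ, (∀ i, 0 ≤ x i) →
        mu1 (Matrix.diagonal (dEps α ε) * bioJac n α k x *
          (Matrix.diagonal (dEps α ε))⁻¹) ≤ -ε / 2) ∧
      (∃ c > (0:ℝ), ∀ t₁ t₂ : ℝ, 0 ≤ t₁ → t₁ ≤ t₂ → ∀ u v : ℝ → (Fin n → ℝ),
        (∀ t ≥ t₁, (∀ i, 0 ≤ u t i) ∧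
          HasDerivWithinAt u (bioF n α k (u t)) (Set.Ici t₁) t) →
        (∀ t ≥ t₁, (∀ i, 0 ≤ v t i) ∧
          HasDerivWithinAt v (bioF n α k (v t)) (Set.Ici t₁) t) →
        ∑ i, |dEps α ε i * (u t₂ i - v t₂ i)| ≤
          Real.exp (-c * (t₂ - t₁)) * ∑ i, |dEps α ε i * (u t₁ i - v t₁ i)|) := by
  obtain ⟨m, rfl⟩ : ∃ m, n = m + 2 := ⟨n - 2, by omega⟩
  obtain ⟨ε, hε, hεα, hprod⟩ := exists_pos_forall_lt_and_lt_prod_sub hα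
    (L := (k - 1) / k ^ 2) (by rwa [div_lt_iff₀ (by positivity)])
  have hmu : ∀ γ ∈ Set.Icc 0 ((k - 1) / k ^ 2),
      mu1 (diagonal (dEps α ε) * feedbackMatrix α γ * (diagonal (dEps α ε))⁻¹) ≤ -ε / 2 := by
    refine fun γ hγ => mu1_conj_feedbackMatrix_le hε.le hεα hγ.1 (hγ.2.trans ?_)
    rw [← dEps_last_mul] at hprod
    nlinarith [dEps_pos hεα (Fin.last (m + 1))]
  refine ⟨ε, hε, hεα, fun x hx => ?_, ε / 2, by positivity, fun t₁ t₂ _ ht u v hu hv => ?_⟩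
  · rw [bioJac_eq_feedbackMatrix, sq]
    exact hmu _ (sub_one_div_mul_mem_Icc hk (hx _) (hx _))
  · refine sum_abs_mul_sub_le_exp_of_mu1_le (fun i => (dEps_pos hεα i).ne')
      (S := {x | ∀ i, 0 ≤ x i}) (fun a ha b hb => ?_) hu hv ht
    refine ⟨_, bioF_sub_bioF α k (by linarith [ha (Fin.last _)]) (by linarith [hb (Fin.last _)]),
      ?_⟩
    rw [← neg_div]
    exact hmu _ (sub_one_div_mul_mem_Icc hk (ha _) (hb _))
end

section
/- Consider the scalar system ẋ = f(x) on Ω = [−1, 1], where f(x) = −2x for |x| < 1/2 and f(x) = −x/|x| for 1/2 ≤ |x| ≤ 1, with solution map x(t, t₁, a) (the solution at time t ≥ t₁ with x(t₁) = a ∈ [−1, 1]). Then: (i) the system is not weakly contractive: there exist a, b ∈ [−1, 1] with a ≠ b and times s₂ > s₁ ≥ 0 such that |x(s₂, s₁, a) − x(s₂, s₁, b)| = |a − b|; yet (ii) the system is SO (contractive after a small overshoot) with respect to the absolute value, with ℓ(ε) = min{ln(1+ε), 1}: for every ε > 0, all t₂ ≥ t₁ ≥ 0, and all a, b ∈ [−1,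 1], |x(t₂, t₁, a) − x(t₂, t₁, b)| ≤ (1+ε)·exp(−min{ln(1+ε), 1}·(t₂−t₁))·|a − b|. -/
/-!
The field `f17` is `-2x` clamped to `[-1, 1]`, so it is nonincreasing and the distance between
two solutions never grows. Above `1/2` every solution falls at unit speed, so the solutions
starting at `1` and `3/4` keep their distance for a quarter unit of time, and the system is not
weakly contractive. But every solution starting in `[-1, 1]` is trapped in `[-1/2, 1/2]` after
time `1/2`. There the field is linear, `-2x`, so distances decay like `e^{-2t}` from then on. This
gives `|x(t) - y(t)| ≤ e^{-2 (t - 1/2)⁺} |a - b|`, and the overshoot factor `1 + ε` absorbs the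
first unit of time.
-/

open Filter Topology

/-- The vector field `f(x) = −2x` for `|x| < 1/2` and `f(x) = −x/|x|` for
`1/2 ≤ |x| ≤ 1`. -/
noncomputable def f17 (y : ℝ) : ℝ :=
  if |y| < 1 / 2 then -2 * y else -y / |y|

open Set Real

theorem f17_eq_max_min (y : ℝ) : f17 y = max (-1) (min 1 (-2 * y)) := by
  unfold f17
  split_ifs with h
  · rw [abs_lt] at h
    rw [min_eq_right (by linarith), max_eq_right (by linarith)]
  · rcases lt_or_ge y 0 with hy | hy
    · rw [abs_of_neg hy] at h ⊢
      rw [neg_div_neg_eq, div_self hy.ne, min_eq_left (by linarith),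
        max_eq_right (by norm_num)]
    · rw [abs_of_nonneg hy] at h ⊢
      rw [neg_div, div_self (by linarith), min_eq_right (by linarith), max_eq_left (by linarith)]

theorem f17_antitone : Antitone f17 := fun u v huv => by
  simp only [f17_eq_max_min]
  exact max_le_max le_rfl (min_le_min le_rfl (by linarith))

theorem f17_neg (y : ℝ) : f17 (-y) = -f17 y := by
  unfold f17
  rw [abs_neg]
  split_ifs <;> ring

theorem neg_one_le_f17 (y : ℝ) : -1 ≤ f17 y := f17_eq_max_min y ▸ le_max_left _ _

theorem f17_of_half_le {y : ℝ} (hy : 1 / 2 ≤ y) : f17 y = -1 := by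
  rw [f17_eq_max_min, min_eq_right (by linarith), max_eq_left (by linarith)]

theorem f17_of_abs_le_half {y : ℝ} (hy : |y| ≤ 1 / 2) : f17 y = -2 * y := by
  rw [abs_le] at hy
  rw [f17_eq_max_min, min_eq_right (by linarith), max_eq_right (by linarith)]

theorem abs_sub_le_exp_mul_of_dissipative {g h g' h' : ℝ → ℝ} {k σ τ : ℝ} (hστ : σ ≤ τ)
    (hgc : ContinuousOn g (Icc σ τ)) (hhc : ContinuousOn h (Icc σ τ))
    (hg : ∀ s ∈ Ico σ τ, HasDerivWithinAt g (g' s) (Ici s) s)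
    (hh : ∀ s ∈ Ico σ τ, HasDerivWithinAt h (h' s) (Ici s) s)
    (hdiss : ∀ s ∈ Ico σ τ, (g' s - h' s) * (g s - h s) ≤ -k * (g s - h s) ^ 2) :
    |g τ - h τ| ≤ exp (-k * (τ - σ)) * |g σ - h σ| := by
  set q := fun s => (exp (k * (s - σ)) * (g s - h s)) ^ 2
  have hq' : ∀ s ∈ Ico σ τ, HasDerivWithinAt q
      (2 * exp (k * (s - σ)) ^ 2 * (k * (g s - h s) ^ 2 + (g' s - h' s) * (g s - h s)))
      (Ici s) s := fun s hs => by
    have hexp : HasDerivAt (fun s => exp (k * (s - σ))) (exp (k * (s - σ)) * k) s := by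
      simpa using ((hasDerivAt_id s).sub_const σ |>.const_mul k).exp
    refine ((hexp.hasDerivWithinAt.mul ((hg s hs).sub (hh s hs))).pow 2).congr_deriv ?_
    simp only [Pi.mul_apply, Pi.sub_apply]
    ring
  have hq'_nonpos : ∀ s ∈ Ico σ τ,
      2 * exp (k * (s - σ)) ^ 2 * (k * (g s - h s) ^ 2 + (g' s - h' s) * (g s - h s)) ≤ 0 :=
    fun s hs => mul_nonpos_of_nonneg_of_nonpos (by positivity) (by linarith [hdiss s hs])
  have hq : q τ ≤ q σ :=
    image_le_of_deriv_right_le_deriv_boundary (B := fun _ => q σ) (by fun_prop) hq' le_rfl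
      continuousOn_const
      (fun s _ => hasDerivWithinAt_const s _ (q σ)) hq'_nonpos ⟨hστ, le_rfl⟩
  have hdecay : |exp (k * (τ - σ)) * (g τ - h τ)| ≤ |g σ - h σ| :=
    sq_le_sq.1 (by simpa [q] using hq)
  calc |g τ - h τ| = exp (-k * (τ - σ)) * |exp (k * (τ - σ)) * (g τ - h τ)| := by
        rw [abs_mul, abs_of_pos (exp_pos _), ← mul_assoc, ← exp_add]
        simp
    _ ≤ exp (-k * (τ - σ)) * |g σ - h σ| := mul_le_mul_of_nonneg_left hdecay (exp_pos _).le

theorem hasDerivAt_sub_sub (c σ u : ℝ) : HasDerivAt (fun u => c - (u - σ)) (-1) u :=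
  ((hasDerivAt_id u).sub_const σ).const_sub c

def IsForwardSolution (F g : ℝ → ℝ) (σ : ℝ) : Prop :=
  ∀ s ≥ σ, HasDerivWithinAt g (F (g s)) (Ici σ) s

namespace IsForwardSolution

variable {F g h : ℝ → ℝ} {σ s : ℝ}

theorem continuousOn (hg : IsForwardSolution F g σ) : ContinuousOn g (Ici σ) :=
  fun s hs => (hg s hs).continuousWithinAt

theorem hasDerivWithinAt_Ici (hg : IsForwardSolution F g σ) (hs : σ ≤ s) :
    HasDerivWithinAt g (F (g s)) (Ici s) s :=
  (hg s hs).mono (Ici_subset_Ici.2 hs)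

theorem mono {τ : ℝ} (hg : IsForwardSolution F g σ) (hστ : σ ≤ τ) : IsForwardSolution F g τ :=
  fun s hs => (hg s (hστ.trans hs)).mono (Ici_subset_Ici.2 hστ)

theorem neg (hF : ∀ y, F (-y) = -F y) (hg : IsForwardSolution F g σ) :
    IsForwardSolution F (fun s => -g s) σ :=
  fun s hs => by rw [hF]; exact (hg s hs).neg

theorem abs_sub_le_exp_mul {k : ℝ} (hg : IsForwardSolution F g σ) (hh : IsForwardSolution F h σ)
    (hs : σ ≤ s)
    (hdiss : ∀ u ∈ Ico σ s, (F (g u) - F (h u)) * (g u - h u) ≤ -k * (g u - h u) ^ 2) :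
    |g s - h s| ≤ exp (-k * (s - σ)) * |g σ - h σ| :=
  abs_sub_le_exp_mul_of_dissipative hs (hg.continuousOn.mono Icc_subset_Ici_self)
    (hh.continuousOn.mono Icc_subset_Ici_self) (fun _ hu => hg.hasDerivWithinAt_Ici hu.1)
    (fun _ hu => hh.hasDerivWithinAt_Ici hu.1) hdiss

theorem abs_sub_le_of_antitone (hF : Antitone F) (hg : IsForwardSolution F g σ)
    (hh : IsForwardSolution F h σ) (hs : σ ≤ s) : |g s - h s| ≤ |g σ - h σ| := by
  have hdiss : ∀ u ∈ Ico σ s, (F (g u) - F (h u)) * (g u - h u) ≤ -0 * (g u - h u) ^ 2 := by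
    intro u _
    rw [neg_zero, zero_mul]
    rcases le_total (g u) (h u) with hle | hle
    · exact mul_nonpos_of_nonneg_of_nonpos (sub_nonneg.2 (hF hle)) (sub_nonpos.2 hle)
    · exact mul_nonpos_of_nonpos_of_nonneg (sub_nonpos.2 (hF hle)) (sub_nonneg.2 hle)
  simpa using hg.abs_sub_le_exp_mul hh hs hdiss

theorem sub_le_apply (hg : IsForwardSolution f17 g σ) (hs : σ ≤ s) : g σ - (s - σ) ≤ g s :=
  image_le_of_deriv_right_le_deriv_boundary
    (fun u _ => (hasDerivAt_sub_sub _ σ u).continuousAt.continuousWithinAt)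
    (fun u _ => (hasDerivAt_sub_sub _ σ u).hasDerivWithinAt)
    (by simp) (hg.continuousOn.mono Icc_subset_Ici_self)
    (fun u hu => hg.hasDerivWithinAt_Ici hu.1) (fun u _ => neg_one_le_f17 (g u)) ⟨hs, le_rfl⟩

theorem apply_eq_sub (hg : IsForwardSolution f17 g σ) (hs : σ ≤ s)
    (hhalf : 1 / 2 ≤ g σ - (s - σ)) : g s = g σ - (s - σ) := by
  refine le_antisymm ?_ (hg.sub_le_apply hs)
  refine image_le_of_deriv_right_le_deriv_boundary
    (hg.continuousOn.mono Icc_subset_Ici_self) (fun u hu => hg.hasDerivWithinAt_Ici hu.1)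
    (by simp) (fun u _ => (hasDerivAt_sub_sub _ σ u).continuousAt.continuousWithinAt)
    (fun u _ => (hasDerivAt_sub_sub _ σ u).hasDerivWithinAt) (fun u hu => ?_) ⟨hs, le_rfl⟩
  have := hg.sub_le_apply hu.1
  rw [f17_of_half_le (by linarith [hu.2])]

/-- Above `1/2` a solution falls at unit speed, so it cannot overtake a barrier falling at speed
`k < 1`. -/
theorem le_of_fence {k c τ : ℝ} (hg : IsForwardSolution f17 g σ) (hk : k < 1) (hστ : σ ≤ τ)
    (hσ : g σ ≤ c) (hfence : ∀ u ∈ Ico σ τ, 1 / 2 < c - k * (u - σ)) :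
    g τ ≤ c - k * (τ - σ) := by
  have hB : ∀ u, HasDerivAt (fun u => c - k * (u - σ)) (-k) u := fun u => by
    simpa using (((hasDerivAt_id u).sub_const σ).const_mul k).const_sub c
  refine image_le_of_deriv_right_lt_deriv_boundary (hg.continuousOn.mono Icc_subset_Ici_self)
    (fun u hu => hg.hasDerivWithinAt_Ici hu.1) (by simpa using hσ) hB
    (fun u hu hgu => ?_) ⟨hστ, le_rfl⟩
  rw [f17_of_half_le (hgu ▸ hfence u hu).le]
  linarith

theorem le_half (hg : IsForwardSolution f17 g σ) (hσ : g σ ≤ 1) (hs : σ + 1 / 2 ≤ s) :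
    g s ≤ 1 / 2 := by
  refine le_of_forall_pos_le_add fun ε hε => ?_
  have hmid : g (σ + 1 / 2) ≤ 1 / 2 + ε := by
    have := hg.le_of_fence (k := 1 - 2 * ε) (τ := σ + 1 / 2) (by linarith) (by linarith) hσ
      fun u hu => by nlinarith [hu.1, hu.2]
    linarith
  have := (hg.mono (by linarith)).le_of_fence (k := 0) (by norm_num) hs hmid fun u _ => by
    linarith
  linarith

theorem abs_le_half (hg : IsForwardSolution f17 g σ) (hσ : g σ ∈ Icc (-1) 1)
    (hs : σ + 1 / 2 ≤ s) : |g s| ≤ 1 / 2 := by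
  rw [abs_le]
  have := (hg.neg f17_neg).le_half (by linarith [hσ.1]) hs
  exact ⟨by linarith, hg.le_half hσ.2 hs⟩

theorem abs_sub_le_exp_max (hg : IsForwardSolution f17 g σ) (hh : IsForwardSolution f17 h σ)
    (hgσ : g σ ∈ Icc (-1) 1) (hhσ : h σ ∈ Icc (-1) 1) (hs : σ ≤ s) :
    |g s - h s| ≤ exp (-2 * max 0 (s - σ - 1 / 2)) * |g σ - h σ| := by
  rcases le_or_gt s (σ + 1 / 2) with hs' | hs'
  · rw [max_eq_left (by linarith), mul_zero, exp_zero, one_mul]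
    exact abs_sub_le_of_antitone f17_antitone hg hh hs
  have hdiss : ∀ u ∈ Ico (σ + 1 / 2) s,
      (f17 (g u) - f17 (h u)) * (g u - h u) ≤ -2 * (g u - h u) ^ 2 := fun u hu => by
    rw [f17_of_abs_le_half (hg.abs_le_half hgσ hu.1),
      f17_of_abs_le_half (hh.abs_le_half hhσ hu.1)]
    exact le_of_eq (by ring)
  calc |g s - h s| ≤ exp (-2 * (s - (σ + 1 / 2))) * |g (σ + 1 / 2) - h (σ + 1 / 2)| :=
        (hg.mono (by linarith)).abs_sub_le_exp_mul (hh.mono (by linarith)) hs'.le hdiss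
    _ ≤ exp (-2 * (s - (σ + 1 / 2))) * |g σ - h σ| :=
        mul_le_mul_of_nonneg_left (abs_sub_le_of_antitone f17_antitone hg hh (by linarith))
          (exp_pos _).le
    _ = _ := by rw [max_eq_right (by linarith)]; ring_nf

end IsForwardSolution

theorem exp_neg_two_mul_max_le {ε Δ : ℝ} (hε : 0 < ε) (hΔ : 0 ≤ Δ) :
    exp (-2 * max 0 (Δ - 1 / 2)) ≤ (1 + ε) * exp (-min (log (1 + ε)) 1 * Δ) := by
  have hℓ : min (log (1 + ε)) 1 ≤ 1 := min_le_right _ _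
  rcases le_or_gt Δ 1 with hΔ1 | hΔ1
  · calc exp (-2 * max 0 (Δ - 1 / 2)) ≤ 1 :=
          exp_le_one_iff.2 (by nlinarith [le_max_left 0 (Δ - 1 / 2)])
      _ = (1 + ε) * exp (-log (1 + ε)) := by
          rw [exp_neg, exp_log (by linarith), mul_inv_cancel₀ (by linarith)]
      _ ≤ (1 + ε) * exp (-min (log (1 + ε)) 1 * Δ) := by
          gcongr
          nlinarith [min_le_left (log (1 + ε)) 1, log_nonneg (by linarith : 1 ≤ 1 + ε)]
  · calc exp (-2 * max 0 (Δ - 1 / 2)) ≤ exp (-min (log (1 + ε)) 1 * Δ) := by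
          rw [max_eq_right (by linarith)]
          exact exp_le_exp.2 (by nlinarith)
      _ ≤ (1 + ε) * exp (-min (log (1 + ε)) 1 * Δ) :=
          le_mul_of_one_le_left (exp_pos _).le (by linarith)

theorem shift_system_not_wc_but_so_general
    (x : ℝ → ℝ → ℝ → ℝ)
    (hinit : ∀ t₁ a, 0 ≤ t₁ → a ∈ Set.Icc (-1:ℝ) 1 → x t₁ t₁ a = a)
    (hode : ∀ t₁ ≥ (0:ℝ), ∀ a ∈ Set.Icc (-1:ℝ) 1, ∀ t ≥ t₁,
      HasDerivWithinAt (fun s => x s t₁ a) (f17 (x t t₁ a)) (Set.Ici t₁) t) :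
    -- (i) not weakly contractive
    ((∃ a ∈ Set.Icc (-1:ℝ) 1, ∃ b ∈ Set.Icc (-1:ℝ) 1, ∃ s₁ s₂ : ℝ,
        a ≠ b ∧ 0 ≤ s₁ ∧ s₁ < s₂ ∧ |x s₂ s₁ a - x s₂ s₁ b| = |a - b|) ∧
     -- (ii) SO with ℓ(ε) = min{ln(1+ε), 1}
     (∀ ε > (0:ℝ), ∀ t₁ t₂ : ℝ, 0 ≤ t₁ → t₁ ≤ t₂ →
        ∀ a ∈ Set.Icc (-1:ℝ) 1, ∀ b ∈ Set.Icc (-1:ℝ) 1,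
          |x t₂ t₁ a - x t₂ t₁ b| ≤
            (1 + ε) * Real.exp (-(min (Real.log (1 + ε)) 1) * (t₂ - t₁)) * |a - b|)) := by
  have hsol : ∀ t₁ ≥ (0:ℝ), ∀ a ∈ Icc (-1:ℝ) 1, IsForwardSolution f17 (fun s => x s t₁ a) t₁ :=
    hode
  constructor
  · have h1 : (1:ℝ) ∈ Icc (-1:ℝ) 1 := by norm_num
    have h34 : (3 / 4 : ℝ) ∈ Icc (-1:ℝ) 1 := by norm_num
    refine ⟨1, h1, 3 / 4, h34, 0, 1 / 4, by norm_num, le_rfl, by norm_num, ?_⟩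
    rw [(hsol 0 le_rfl 1 h1).apply_eq_sub (by norm_num) (by norm_num [hinit 0 1 le_rfl h1]),
      (hsol 0 le_rfl (3 / 4) h34).apply_eq_sub (by norm_num)
        (by norm_num [hinit 0 (3 / 4) le_rfl h34]), hinit 0 1 le_rfl h1,
      hinit 0 (3 / 4) le_rfl h34]
    norm_num
  · intro ε hε t₁ t₂ ht₁ ht a ha b hb
    have hstart : ∀ c ∈ Icc (-1:ℝ) 1, x t₁ t₁ c ∈ Icc (-1:ℝ) 1 := fun c hc => by
      rwa [hinit t₁ c ht₁ hc]
    calc |x t₂ t₁ a - x t₂ t₁ b| ≤ exp (-2 * max 0 (t₂ - t₁ - 1 / 2)) * |a - b| := by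
          simpa only [hinit t₁ a ht₁ ha, hinit t₁ b ht₁ hb] using
            (hsol t₁ ht₁ a ha).abs_sub_le_exp_max (hsol t₁ ht₁ b hb) (hstart a ha) (hstart b hb) ht
      _ ≤ _ := mul_le_mul_of_nonneg_right (exp_neg_two_mul_max_le hε (sub_nonneg.2 ht))
          (abs_nonneg _)

/-- The scalar system `ẋ = f17(x)` on `Ω = [−1,1]` is not weakly
contractive, yet it is SO (contractive after a small overshoot) w.r.t. the absolute
value, with `ℓ(ε) = min{ln(1+ε), 1}`. -/
theorem shift_system_not_wc_but_so
    (x : ℝ → ℝ → ℝ → ℝ)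
    (hmem : ∀ t t₁ a, 0 ≤ t₁ → t₁ ≤ t → a ∈ Set.Icc (-1:ℝ) 1 →
      x t t₁ a ∈ Set.Icc (-1:ℝ) 1)
    (hinit : ∀ t₁ a, 0 ≤ t₁ → a ∈ Set.Icc (-1:ℝ) 1 → x t₁ t₁ a = a)
    (hode : ∀ t₁ ≥ (0:ℝ), ∀ a ∈ Set.Icc (-1:ℝ) 1, ∀ t ≥ t₁,
      HasDerivWithinAt (fun s => x s t₁ a) (f17 (x t t₁ a)) (Set.Ici t₁) t) :
    -- (i) not weakly contractive
    ((∃ a ∈ Set.Icc (-1:ℝ) 1, ∃ b ∈ Set.Icc (-1:ℝ) 1, ∃ s₁ s₂ : ℝ,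
        a ≠ b ∧ 0 ≤ s₁ ∧ s₁ < s₂ ∧ |x s₂ s₁ a - x s₂ s₁ b| = |a - b|) ∧
     -- (ii) SO with ℓ(ε) = min{ln(1+ε), 1}
     (∀ ε > (0:ℝ), ∀ t₁ t₂ : ℝ, 0 ≤ t₁ → t₁ ≤ t₂ →
        ∀ a ∈ Set.Icc (-1:ℝ) 1, ∀ b ∈ Set.Icc (-1:ℝ) 1,
          |x t₂ t₁ a - x t₂ t₁ b| ≤
            (1 + ε) * Real.exp (-(min (Real.log (1 + ε)) 1) * (t₂ - t₁)) * |a - b|)) :=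
  shift_system_not_wc_but_so_general x hinit hode
end
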